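/- arXiv:1812.10787 — 9 statements merged into one kernel-verified Lean document; each statement's English description precedes it below -/
import Mathlib

section
/- For measurable g : S^k → S and probability measures μ, ν on a Polish space S, the total variation distance between T_g(μ) and T_g(ν) satisfies ‖T_g(μ) - T_g(ν)‖ ≤ k ‖μ - ν‖, where T_g(μ) is the law of g(X_1,…,X_k) for (X_i) i.i.d. with law μ. -/
open MeasureTheory

/-- The total variation distance `‖μ - ν‖ = sup_A |μ(A) - ν(A)|`
(corresponding to `(1/2) sup_{|f|≤1} |∫ f dμ - ∫ f dν|`). -/
noncomputable def tvDist {S : Type*} [MeasurableSpace S] (μ ν : Measure S) : ℝ :=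
  sSup {c | ∃ A : Set S, MeasurableSet A ∧ c = |(μ A).toReal - (ν A).toReal|}

section Aux

variable {α : Type*} [MeasurableSpace α] {β : Type*} [MeasurableSpace β]

lemma tvSet_bddAbove (μ ν : Measure α) [IsFiniteMeasure μ] [IsFiniteMeasure ν] :
    BddAbove {c | ∃ A : Set α, MeasurableSet A ∧ c = |(μ A).toReal - (ν A).toReal|} := by
  refine ⟨(μ Set.univ).toReal + (ν Set.univ).toReal, ?_⟩
  rintro c ⟨A, hA, rfl⟩
  have h1 : (μ A).toReal ≤ (μ Set.univ).toReal :=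
    ENNReal.toReal_mono (measure_ne_top _ _) (measure_mono (Set.subset_univ _))
  have h2 : (ν A).toReal ≤ (ν Set.univ).toReal :=
    ENNReal.toReal_mono (measure_ne_top _ _) (measure_mono (Set.subset_univ _))
  have h3 : 0 ≤ (μ A).toReal := ENNReal.toReal_nonneg
  have h4 : 0 ≤ (ν A).toReal := ENNReal.toReal_nonneg
  rw [abs_sub_le_iff]; constructor <;> linarith

lemma abs_le_tvDist (μ ν : Measure α) [IsFiniteMeasure μ] [IsFiniteMeasure ν]
    {A : Set α} (hA : MeasurableSet A) :
    |(μ A).toReal - (ν A).toReal| ≤ tvDist μ ν :=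
  le_csSup (tvSet_bddAbove μ ν) ⟨A, hA, rfl⟩

lemma tvDist_nonneg (μ ν : Measure α) [IsFiniteMeasure μ] [IsFiniteMeasure ν] :
    0 ≤ tvDist μ ν := by
  have := abs_le_tvDist μ ν MeasurableSet.empty
  have h : (0 : ℝ) ≤ |(μ ∅).toReal - (ν ∅).toReal| := abs_nonneg _
  linarith

lemma tvDist_le_of_forall {μ ν : Measure α} {c : ℝ} (hc : 0 ≤ c)
    (h : ∀ A : Set α, MeasurableSet A → |(μ A).toReal - (ν A).toReal| ≤ c) :
    tvDist μ ν ≤ c := by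
  apply Real.sSup_le _ hc
  rintro x ⟨A, hA, rfl⟩
  exact h A hA

lemma measure_le_add_tv (μ ν : Measure α) [IsFiniteMeasure μ] [IsFiniteMeasure ν]
    {A : Set α} (hA : MeasurableSet A) :
    μ A ≤ ν A + ENNReal.ofReal (tvDist μ ν) := by
  have h := abs_le_tvDist μ ν hA
  rw [abs_sub_le_iff] at h
  have h1 : (μ A).toReal ≤ (ν A).toReal + tvDist μ ν := by linarith [h.1]
  calc μ A = ENNReal.ofReal (μ A).toReal := (ENNReal.ofReal_toReal (measure_ne_top _ _)).symm
    _ ≤ ENNReal.ofReal ((ν A).toReal + tvDist μ ν) := ENNReal.ofReal_le_ofReal h1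
    _ = ENNReal.ofReal (ν A).toReal + ENNReal.ofReal (tvDist μ ν) :=
        ENNReal.ofReal_add ENNReal.toReal_nonneg (tvDist_nonneg μ ν)
    _ = ν A + ENNReal.ofReal (tvDist μ ν) := by
        rw [ENNReal.ofReal_toReal (measure_ne_top _ _)]

lemma abs_toReal_le_of_le {a b : ENNReal} (ha : a ≠ ⊤) (hb : b ≠ ⊤) {c : ℝ} (hc : 0 ≤ c)
    (h1 : a ≤ b + ENNReal.ofReal c) (h2 : b ≤ a + ENNReal.ofReal c) :
    |a.toReal - b.toReal| ≤ c := by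
  have hbc : b + ENNReal.ofReal c ≠ ⊤ := by simp [hb]
  have hac : a + ENNReal.ofReal c ≠ ⊤ := by simp [ha]
  have h1' : a.toReal ≤ b.toReal + c := by
    have := ENNReal.toReal_mono hbc h1
    rwa [ENNReal.toReal_add hb ENNReal.ofReal_ne_top, ENNReal.toReal_ofReal hc] at this
  have h2' : b.toReal ≤ a.toReal + c := by
    have := ENNReal.toReal_mono hac h2
    rwa [ENNReal.toReal_add ha ENNReal.ofReal_ne_top, ENNReal.toReal_ofReal hc] at this
  rw [abs_sub_le_iff]; constructor <;> linarith

lemma tvDist_map_le {g : α → β} (hg : Measurable g) (μ ν : Measure α)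
    [IsFiniteMeasure μ] [IsFiniteMeasure ν] :
    tvDist (Measure.map g μ) (Measure.map g ν) ≤ tvDist μ ν := by
  refine tvDist_le_of_forall (tvDist_nonneg μ ν) fun A hA => ?_
  rw [Measure.map_apply hg hA, Measure.map_apply hg hA]
  exact abs_le_tvDist μ ν (hg hA)

lemma tvDist_triangle (μ ν ρ : Measure α) [IsFiniteMeasure μ] [IsFiniteMeasure ν]
    [IsFiniteMeasure ρ] : tvDist μ ρ ≤ tvDist μ ν + tvDist ν ρ := by
  refine tvDist_le_of_forall (add_nonneg (tvDist_nonneg μ ν) (tvDist_nonneg ν ρ)) fun A hA => ?_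
  calc |(μ A).toReal - (ρ A).toReal|
      ≤ |(μ A).toReal - (ν A).toReal| + |(ν A).toReal - (ρ A).toReal| := abs_sub_le _ _ _
    _ ≤ tvDist μ ν + tvDist ν ρ := add_le_add (abs_le_tvDist μ ν hA) (abs_le_tvDist ν ρ hA)

lemma tvDist_prod_left (P P' : Measure α) (Q : Measure β)
    [IsProbabilityMeasure P] [IsProbabilityMeasure P'] [IsProbabilityMeasure Q] :
    tvDist (P.prod Q) (P'.prod Q) ≤ tvDist P P' := by
  refine tvDist_le_of_forall (tvDist_nonneg P P') fun B hB => ?_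
  have key : ∀ (R R' : Measure α), IsProbabilityMeasure R → IsProbabilityMeasure R' →
      R.prod Q B ≤ R'.prod Q B + ENNReal.ofReal (tvDist R R') := by
    intro R R' hR hR'
    rw [Measure.prod_apply_symm hB, Measure.prod_apply_symm hB]
    calc ∫⁻ y, R ((fun x => (x, y)) ⁻¹' B) ∂Q
        ≤ ∫⁻ y, (R' ((fun x => (x, y)) ⁻¹' B) + ENNReal.ofReal (tvDist R R')) ∂Q := by
          refine lintegral_mono fun y => ?_
          exact measure_le_add_tv R R' (measurable_prodMk_right hB)
      _ = (∫⁻ y, R' ((fun x => (x, y)) ⁻¹' B) ∂Q) + ENNReal.ofReal (tvDist R R') := by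
          rw [lintegral_add_right _ measurable_const, lintegral_const, measure_univ, mul_one]
  have h1 := key P P' ‹_› ‹_›
  have h2 := key P' P ‹_› ‹_›
  have hsymm : tvDist P' P = tvDist P P' := by
    unfold tvDist; congr 1; ext c; constructor <;> rintro ⟨A, hA, rfl⟩ <;>
      exact ⟨A, hA, (abs_sub_comm _ _)⟩
  rw [hsymm] at h2
  exact abs_toReal_le_of_le (measure_ne_top _ _) (measure_ne_top _ _)
    (tvDist_nonneg P P') h1 h2

lemma tvDist_prod_right (P : Measure α) (Q Q' : Measure β)
    [IsProbabilityMeasure P] [IsProbabilityMeasure Q] [IsProbabilityMeasure Q'] :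
    tvDist (P.prod Q) (P.prod Q') ≤ tvDist Q Q' := by
  refine tvDist_le_of_forall (tvDist_nonneg Q Q') fun B hB => ?_
  have key : ∀ (R R' : Measure β), IsProbabilityMeasure R → IsProbabilityMeasure R' →
      P.prod R B ≤ P.prod R' B + ENNReal.ofReal (tvDist R R') := by
    intro R R' hR hR'
    rw [Measure.prod_apply hB, Measure.prod_apply hB]
    calc ∫⁻ x, R (Prod.mk x ⁻¹' B) ∂P
        ≤ ∫⁻ x, (R' (Prod.mk x ⁻¹' B) + ENNReal.ofReal (tvDist R R')) ∂P := by
          refine lintegral_mono fun x => ?_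
          exact measure_le_add_tv R R' (measurable_prodMk_left hB)
      _ = (∫⁻ x, R' (Prod.mk x ⁻¹' B) ∂P) + ENNReal.ofReal (tvDist R R') := by
          rw [lintegral_add_right _ measurable_const, lintegral_const, measure_univ, mul_one]
  have h1 := key Q Q' ‹_› ‹_›
  have h2 := key Q' Q ‹_› ‹_›
  have hsymm : tvDist Q' Q = tvDist Q Q' := by
    unfold tvDist; congr 1; ext c; constructor <;> rintro ⟨A, hA, rfl⟩ <;>
      exact ⟨A, hA, (abs_sub_comm _ _)⟩
  rw [hsymm] at h2
  exact abs_toReal_le_of_le (measure_ne_top _ _) (measure_ne_top _ _)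
    (tvDist_nonneg Q Q') h1 h2

lemma tvDist_pi_le {S : Type*} [MeasurableSpace S] (k : ℕ) (μ ν : Measure S)
    [IsProbabilityMeasure μ] [IsProbabilityMeasure ν] :
    tvDist (Measure.pi fun _ : Fin k => μ) (Measure.pi fun _ : Fin k => ν)
      ≤ (k : ℝ) * tvDist μ ν := by
  induction k with
  | zero =>
      rw [Measure.pi_of_empty (fun _ : Fin 0 => μ), Measure.pi_of_empty (fun _ : Fin 0 => ν)]
      simp only [Nat.cast_zero, zero_mul]
      exact tvDist_le_of_forall le_rfl fun A hA => by simp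
  | succ n ih =>
      set e := MeasurableEquiv.piFinSuccAbove (fun _ : Fin (n + 1) => S) 0 with he
      have hμ : (Measure.pi fun _ : Fin (n + 1) => μ) =
          Measure.map e.symm (μ.prod (Measure.pi fun _ : Fin n => μ)) :=
        ((measurePreserving_piFinSuccAbove (fun _ : Fin (n + 1) => μ) 0).symm e).map_eq.symm
      have hν : (Measure.pi fun _ : Fin (n + 1) => ν) =
          Measure.map e.symm (ν.prod (Measure.pi fun _ : Fin n => ν)) :=
        ((measurePreserving_piFinSuccAbove (fun _ : Fin (n + 1) => ν) 0).symm e).map_eq.symm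
      rw [hμ, hν]
      calc tvDist (Measure.map e.symm (μ.prod (Measure.pi fun _ : Fin n => μ)))
            (Measure.map e.symm (ν.prod (Measure.pi fun _ : Fin n => ν)))
          ≤ tvDist (μ.prod (Measure.pi fun _ : Fin n => μ))
              (ν.prod (Measure.pi fun _ : Fin n => ν)) :=
            tvDist_map_le e.symm.measurable _ _
        _ ≤ tvDist (μ.prod (Measure.pi fun _ : Fin n => μ))
              (ν.prod (Measure.pi fun _ : Fin n => μ)) +
            tvDist (ν.prod (Measure.pi fun _ : Fin n => μ))
              (ν.prod (Measure.pi fun _ : Fin n => ν)) := tvDist_triangle _ _ _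
        _ ≤ tvDist μ ν +
            tvDist (Measure.pi fun _ : Fin n => μ) (Measure.pi fun _ : Fin n => ν) :=
            add_le_add (tvDist_prod_left _ _ _) (tvDist_prod_right _ _ _)
        _ ≤ tvDist μ ν + (n : ℝ) * tvDist μ ν := by linarith [ih]
        _ = ((n + 1 : ℕ) : ℝ) * tvDist μ ν := by push_cast; ring

end Aux

/-- For measurable `g : S^k → S`, the operator `T_g(μ) :=` law of `g(X_1,…,X_k)` with
`(X_i)` i.i.d. with law `μ` satisfies `‖T_g(μ) - T_g(ν)‖ ≤ k ‖μ - ν‖`. -/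
theorem stmt3 {S : Type*} [MeasurableSpace S] (k : ℕ) (g : (Fin k → S) → S)
    (hg : Measurable g) (μ ν : Measure S)
    [IsProbabilityMeasure μ] [IsProbabilityMeasure ν] :
    tvDist (Measure.map g (Measure.pi fun _ : Fin k => μ))
        (Measure.map g (Measure.pi fun _ : Fin k => ν))
      ≤ (k : ℝ) * tvDist μ ν := by
  calc tvDist (Measure.map g (Measure.pi fun _ : Fin k => μ))
        (Measure.map g (Measure.pi fun _ : Fin k => ν))
      ≤ tvDist (Measure.pi fun _ : Fin k => μ) (Measure.pi fun _ : Fin k => ν) :=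
        tvDist_map_le hg _ _
    _ ≤ (k : ℝ) * tvDist μ ν := tvDist_pi_le k μ ν
end

section
/- The semigroup (T_t) of the mean-field equation is a contraction in total variation with rate K: ‖T_t(μ) - T_t(ν)‖ ≤ e^{Kt} ‖μ - ν‖ for all probability measures μ, ν on S and t ≥ 0, where K = ∫ r(dω)(κ(ω) - 1). In particular if ∫ r(dω)(κ(ω)-1) < 0 the operators form a strict contraction semigroup. -/
/-!
For a measurable set `A`, the weighted difference `e^{|r|s} (μ_s(A) - ν_s(A))` has derivative
`|r| e^{|r|s} (T(μ_s)(A) - T(ν_s)(A))`: the weight absorbs the loss term of the equation. The map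
`T` is Lipschitz in total variation with constant the mean offspring number
`m = ∫ κ d(|r|⁻¹ r)`, since exchanging the `κ(ω)` i.i.d. inputs one at a time from `μ` to `ν`
costs at most `‖μ - ν‖` each. Hence the supremum over `A`, namely `e^{|r|s} ‖μ_s - ν_s‖`, grows
at rate at most `|r| m = ∫ κ dr`, and Gronwall's inequality gives the bound with
`K = ∫ κ dr - |r|`.
-/

open MeasureTheory

/-- The RDE operator: law of `γ[ω](X_1, X_2, …)` with `ω ~ |r|⁻¹ r` and `X_i` i.i.d. `μ`. -/
noncomputable def rdeT {Ω S : Type*} [MeasurableSpace Ω] [MeasurableSpace S] [Nonempty S]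
    (r : Measure Ω) (γ : Ω → (ℕ → S) → S) (κ : Ω → ℕ) (μ : Measure S) : Measure S :=
  ((r Set.univ)⁻¹ • r).bind fun ω =>
    Measure.map
      (fun v : Fin (κ ω) → S =>
        γ ω (fun i => if h : i < κ ω then v ⟨i, h⟩ else Classical.arbitrary S))
      (Measure.pi fun _ : Fin (κ ω) => μ)

/-- A family `(μ_t)_{t ≥ 0}` of probability measures solves the mean-field equation
`dμ_t/dt = |r| (T(μ_t) - μ_t)`, interpreted weakly against bounded measurable functions. -/
def SolvesMeanField {Ω S : Type*} [MeasurableSpace Ω] [MeasurableSpace S] [Nonempty S]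
    (r : Measure Ω) (γ : Ω → (ℕ → S) → S) (κ : Ω → ℕ) (μ : ℝ → Measure S) : Prop :=
  (∀ t : ℝ, 0 ≤ t → IsProbabilityMeasure (μ t)) ∧
  ∀ φ : S → ℝ, Measurable φ → (∃ C, ∀ x, |φ x| ≤ C) →
    ∀ t : ℝ, 0 ≤ t →
      HasDerivAt (fun s => ∫ x, φ x ∂(μ s))
        ((r Set.univ).toReal *
          ((∫ x, φ x ∂(rdeT r γ κ (μ t))) - ∫ x, φ x ∂(μ t))) t

open Set Filter Topology
open scoped ENNReal

section SupGronwall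

variable {ι : Type*} {f f' : ι → ℝ → ℝ} {d : ℝ → ℝ}

lemma le_add_mul_of_isLUB_abs_of_abs_deriv_le {x z M : ℝ} (hxz : x ≤ z)
    (hf : ∀ i, ∀ s ∈ Icc x z, HasDerivWithinAt (f i) (f' i s) (Icc x z) s)
    (hdx : IsLUB (range fun i => |f i x|) (d x)) (hdz : IsLUB (range fun i => |f i z|) (d z))
    (hM : ∀ i, ∀ s ∈ Icc x z, |f' i s| ≤ M) :
    d z ≤ d x + M * (z - x) := by
  refine hdz.2 (forall_mem_range.2 fun i => ?_)
  have hinc : |f i z - f i x| ≤ M * (z - x) := by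
    simpa only [Real.norm_eq_abs] using norm_image_sub_le_of_norm_deriv_le_segment' (hf i)
      (fun s hs => hM i s (Ico_subset_Icc_self hs)) z (right_mem_Icc.2 hxz)
  calc |f i z| ≤ |f i x| + |f i z - f i x| := sub_le_iff_le_add'.1 (abs_sub_abs_le_abs_sub _ _)
    _ ≤ d x + M * (z - x) := add_le_add (hdx.1 (mem_range_self i)) hinc

lemma continuousOn_of_isLUB_abs_of_abs_deriv_le {s : Set ℝ} {L : ℝ} (hs : Convex ℝ s)
    (hf : ∀ i, ∀ x ∈ s, HasDerivWithinAt (f i) (f' i x) s x)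
    (hd : ∀ x ∈ s, IsLUB (range fun i => |f i x|) (d x))
    (hL : ∀ i, ∀ x ∈ s, |f' i x| ≤ L) :
    ContinuousOn d s := by
  refine (LipschitzOnWith.of_le_add_mul' L fun x hx y hy =>
    (hd x hx).2 (forall_mem_range.2 fun i => ?_)).continuousOn
  have hinc : |f i x - f i y| ≤ L * dist x y := by
    simpa only [Real.norm_eq_abs, Real.dist_eq] using hs.norm_image_sub_le_of_norm_hasDerivWithin_le
      (hf i) (fun z hz => hL i z hz) hy hx
  calc |f i x| ≤ |f i y| + |f i x - f i y| := sub_le_iff_le_add'.1 (abs_sub_abs_le_abs_sub _ _)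
    _ ≤ d y + L * dist x y := add_le_add ((hd y hy).1 (mem_range_self i)) hinc

theorem le_mul_exp_of_isLUB_abs_of_abs_deriv_le {a b K : ℝ} (hK : 0 ≤ K) (hab : a ≤ b)
    (hdc : ContinuousOn d (Icc a b))
    (hf : ∀ i, ∀ s ∈ Icc a b, HasDerivWithinAt (f i) (f' i s) (Icc a b) s)
    (hd : ∀ s ∈ Icc a b, IsLUB (range fun i => |f i s|) (d s))
    (hf' : ∀ i, ∀ s ∈ Icc a b, |f' i s| ≤ K * d s) :
    d b ≤ d a * Real.exp (K * (b - a)) := by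
  have slope : ∀ x ∈ Ico a b, ∀ ρ, K * d x < ρ →
      ∃ᶠ z in 𝓝[>] x, (z - x)⁻¹ * (d z - d x) < ρ := by
    intro x hx ρ hρ
    obtain ⟨ε, hε, hερ⟩ : ∃ ε > 0, K * (d x + ε) < ρ := by
      have hK1 : 0 < K + 1 := by linarith
      refine ⟨(ρ - K * d x) / (K + 1), div_pos (sub_pos.2 hρ) hK1, ?_⟩
      have : K * ((ρ - K * d x) / (K + 1)) < ρ - K * d x := by
        rw [mul_div_assoc', div_lt_iff₀ hK1]
        nlinarith
      linarith [mul_add K (d x) ((ρ - K * d x) / (K + 1))]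
    obtain ⟨δ, hδ, hball⟩ := Metric.mem_nhdsWithin_iff.1 <|
      hdc x (Ico_subset_Icc_self hx) (gt_mem_nhds (lt_add_of_pos_right (d x) hε))
    refine Eventually.frequently ?_
    filter_upwards [Ioo_mem_nhdsGT (lt_min (lt_add_of_pos_right x hδ) hx.2)] with z hz
    have hsub : Icc x z ⊆ Icc a b := Icc_subset_Icc hx.1 (hz.2.le.trans (min_le_right _ _))
    have hnear : ∀ s ∈ Icc x z, d s ≤ d x + ε := fun s hs => le_of_lt <| hball
      ⟨by rw [Metric.mem_ball, Real.dist_eq, abs_of_nonneg (sub_nonneg.2 hs.1)]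
          linarith [hs.2, hz.2.trans_le (min_le_left _ _)], hsub hs⟩
    have hinc := le_add_mul_of_isLUB_abs_of_abs_deriv_le hz.1.le
      (fun i s hs => (hf i s (hsub hs)).mono hsub) (hd x (hsub (left_mem_Icc.2 hz.1.le)))
      (hd z (hsub (right_mem_Icc.2 hz.1.le)))
      (fun i s hs => (hf' i s (hsub hs)).trans (mul_le_mul_of_nonneg_left (hnear s hs) hK))
    rw [inv_mul_lt_iff₀ (sub_pos.2 hz.1)]
    nlinarith [sub_pos.2 hz.1]
  simpa only [gronwallBound_ε0] using le_gronwallBound_of_liminf_deriv_right_le hdc slope le_rfl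
    (fun x _ => (add_zero (K * d x)).ge) b (right_mem_Icc.2 hab)

end SupGronwall

section TotalVariation

variable {S : Type*} [MeasurableSpace S] (p q : Measure S)

lemma tvDist_comm : tvDist p q = tvDist q p := by
  simp only [tvDist, abs_sub_comm]

lemma tvDist_le {ε : ℝ} (h : ∀ A, MeasurableSet A → |p.real A - q.real A| ≤ ε) :
    tvDist p q ≤ ε :=
  csSup_le ⟨_, ∅, .empty, rfl⟩ <| by rintro _ ⟨A, hA, rfl⟩; exact h A hA

variable [IsProbabilityMeasure p] [IsProbabilityMeasure q]

lemma abs_measureReal_sub_le_one (A : Set S) : |p.real A - q.real A| ≤ 1 :=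
  abs_sub_le_of_nonneg_of_le measureReal_nonneg measureReal_le_one measureReal_nonneg
    measureReal_le_one

lemma abs_measureReal_sub_le_tvDist {A : Set S} (hA : MeasurableSet A) :
    |p.real A - q.real A| ≤ tvDist p q :=
  le_csSup ⟨1, by rintro _ ⟨B, -, rfl⟩; exact abs_measureReal_sub_le_one p q B⟩ ⟨A, hA, rfl⟩

lemma isLUB_tvDist :
    IsLUB (range fun A : {A : Set S // MeasurableSet A} => |p.real A - q.real A|) (tvDist p q) :=
  ⟨forall_mem_range.2 fun A => abs_measureReal_sub_le_tvDist p q A.2,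
    fun _ hε => tvDist_le p q fun A hA => hε ⟨⟨A, hA⟩, rfl⟩⟩

lemma isLUB_abs_mul_tvDist {a : ℝ} (ha : 0 ≤ a) :
    IsLUB (range fun A : {A : Set S // MeasurableSet A} => |a * (p.real A - q.real A)|)
      (a * tvDist p q) := by
  have := (isLUB_tvDist p q).mul_left ha
  rw [← range_comp] at this
  simpa only [Function.comp_def, abs_mul, abs_of_nonneg ha] using this

lemma tvDist_le_one : tvDist p q ≤ 1 :=
  tvDist_le p q fun A _ => abs_measureReal_sub_le_one p q A

lemma tvDist_nonneg_s6 : 0 ≤ tvDist p q :=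
  (abs_nonneg _).trans (abs_measureReal_sub_le_tvDist p q .empty)

lemma measure_le_add_tvDist {A : Set S} (hA : MeasurableSet A) :
    p A ≤ q A + ENNReal.ofReal (tvDist p q) := by
  rw [← ofReal_measureReal (measure_ne_top p A), ← ofReal_measureReal (measure_ne_top q A),
    ← ENNReal.ofReal_add measureReal_nonneg (tvDist_nonneg_s6 p q)]
  exact ENNReal.ofReal_le_ofReal
    (by linarith [(abs_sub_le_iff.1 (abs_measureReal_sub_le_tvDist p q hA)).1])

lemma tvDist_le_of_measure_le_add {ε : ℝ} (hε : 0 ≤ ε)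
    (hpq : ∀ A, MeasurableSet A → p A ≤ q A + ENNReal.ofReal ε)
    (hqp : ∀ A, MeasurableSet A → q A ≤ p A + ENNReal.ofReal ε) :
    tvDist p q ≤ ε := by
  have key : ∀ (m m' : Measure S) [IsProbabilityMeasure m] [IsProbabilityMeasure m'] (A : Set S),
      m A ≤ m' A + ENNReal.ofReal ε → m.real A ≤ m'.real A + ε := fun m m' _ _ A h => by
    simpa [measureReal_def, ENNReal.toReal_add, hε] using
      ENNReal.toReal_mono (by finiteness) h
  exact tvDist_le p q fun A hA => abs_sub_le_iff.2
    ⟨by linarith [key p q A (hpq A hA)], by linarith [key q p A (hqp A hA)]⟩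

/-- Layer-cake: `∫ f = ∫₀¹ m {f > t} dt`, and `tvDist` bounds the integrand slice by slice. -/
lemma lintegral_le_add_tvDist {f : S → ℝ≥0∞} (hf : Measurable f) (hf1 : ∀ x, f x ≤ 1) :
    ∫⁻ x, f x ∂p ≤ ∫⁻ x, f x ∂q + ENNReal.ofReal (tvDist p q) := by
  set g : S → ℝ := fun x => (f x).toReal
  have hg : Measurable g := hf.ennreal_toReal
  have layer (m : Measure S) : ∫⁻ x, f x ∂m = ∫⁻ t in Ioi 0, m {x | t < g x} := by
    rw [← lintegral_eq_lintegral_meas_lt m (.of_forall fun _ => ENNReal.toReal_nonneg)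
      hg.aemeasurable]
    exact lintegral_congr fun x =>
      (ENNReal.ofReal_toReal (ne_top_of_le_ne_top ENNReal.one_ne_top (hf1 x))).symm
  have slice : ∀ t ∈ Ioi (0 : ℝ), p {x | t < g x}
      ≤ q {x | t < g x} + (Ioc 0 1).indicator (fun _ => ENNReal.ofReal (tvDist p q)) t := by
    intro t ht
    by_cases ht1 : t ≤ 1
    · rw [indicator_of_mem (mem_Ioc.2 ⟨ht, ht1⟩)]
      exact measure_le_add_tvDist p q (measurableSet_lt measurable_const hg)
    · have : {x | t < g x} = ∅ := eq_empty_of_forall_notMem fun x hx =>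
        ht1 (hx.le.trans (by simpa [g] using ENNReal.toReal_mono ENNReal.one_ne_top (hf1 x)))
      simp [this]
  calc ∫⁻ x, f x ∂p ≤ ∫⁻ t in Ioi 0, (q {x | t < g x}
        + (Ioc 0 1).indicator (fun _ => ENNReal.ofReal (tvDist p q)) t) :=
        (layer p).trans_le (setLIntegral_mono' measurableSet_Ioi slice)
    _ = ∫⁻ x, f x ∂q + ENNReal.ofReal (tvDist p q) := by
        rw [lintegral_add_right _ (measurable_const.indicator measurableSet_Ioc), layer q,
          lintegral_indicator measurableSet_Ioc, Measure.restrict_restrict measurableSet_Ioc,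
          inter_eq_left.2 Ioc_subset_Ioi_self]
        simp

lemma pi_le_add_tvDist (n : ℕ) {B : Set (Fin n → S)} (hB : MeasurableSet B) :
    Measure.pi (fun _ => p) B ≤ Measure.pi (fun _ => q) B + ENNReal.ofReal (n * tvDist p q) := by
  induction n with
  | zero =>
    rw [Measure.pi_of_empty, Measure.pi_of_empty]
    exact le_self_add
  | succ n ih =>
    let e := MeasurableEquiv.piFinSuccAbove (fun _ : Fin (n + 1) => S) 0
    have hB' : MeasurableSet (e.symm ⁻¹' B) := e.symm.measurable hB
    have slices (m : Measure S) [IsProbabilityMeasure m] :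
        Measure.pi (fun _ => m) B
          = ∫⁻ x, Measure.pi (fun _ => m) (Prod.mk x ⁻¹' (e.symm ⁻¹' B)) ∂m := by
      rw [← ((measurePreserving_piFinSuccAbove (fun _ => m) 0).symm e).measure_preimage
        hB.nullMeasurableSet, Measure.prod_apply hB']
    rw [slices p, slices q]
    calc ∫⁻ x, Measure.pi (fun _ => p) (Prod.mk x ⁻¹' (e.symm ⁻¹' B)) ∂p
        ≤ ∫⁻ x, (Measure.pi (fun _ => q) (Prod.mk x ⁻¹' (e.symm ⁻¹' B))
          + ENNReal.ofReal (n * tvDist p q)) ∂p :=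
          lintegral_mono fun x => ih (measurable_prodMk_left hB')
      _ = ∫⁻ x, Measure.pi (fun _ => q) (Prod.mk x ⁻¹' (e.symm ⁻¹' B)) ∂p
          + ENNReal.ofReal (n * tvDist p q) := by
          rw [lintegral_add_right _ measurable_const, lintegral_const, measure_univ, mul_one]
      _ ≤ ∫⁻ x, Measure.pi (fun _ => q) (Prod.mk x ⁻¹' (e.symm ⁻¹' B)) ∂q
          + ENNReal.ofReal (tvDist p q) + ENNReal.ofReal (n * tvDist p q) := by
          gcongr
          exact lintegral_le_add_tvDist p q (measurable_measure_prodMk_left hB')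
            fun _ => prob_le_one
      _ = _ := by
          rw [add_assoc, ← ENNReal.ofReal_add (tvDist_nonneg_s6 p q)
            (mul_nonneg n.cast_nonneg (tvDist_nonneg_s6 p q))]
          congr 2
          push_cast
          ring

end TotalVariation

section RDE

variable {Ω S : Type*} [MeasurableSpace Ω] [MeasurableSpace S] [Nonempty S]

noncomputable def padVec (n : ℕ) (v : Fin n → S) : ℕ → S :=
  fun i => if h : i < n then v ⟨i, h⟩ else Classical.arbitrary S

lemma measurable_padVec (n : ℕ) : Measurable (padVec (S := S) n) := by
  refine measurable_pi_lambda _ fun i => ?_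
  by_cases h : i < n
  · simpa only [padVec, dif_pos h] using measurable_pi_apply _
  · simpa only [padVec, dif_neg h] using measurable_const

noncomputable def rdeKernel (γ : Ω → (ℕ → S) → S) (κ : Ω → ℕ) (μ : Measure S) (ω : Ω) :
    Measure S :=
  (Measure.pi fun _ : Fin (κ ω) => μ).map fun v => γ ω (padVec (κ ω) v)

variable {γ : Ω → (ℕ → S) → S} {κ : Ω → ℕ}

lemma rdeT_eq_bind (r : Measure Ω) (μ : Measure S) :
    rdeT r γ κ μ = ((r univ)⁻¹ • r).bind (rdeKernel γ κ μ) :=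
  rfl

lemma measurable_gamma_padVec (hγ : Measurable (Function.uncurry γ)) (n : ℕ) :
    Measurable fun x : Ω × (Fin n → S) => γ x.1 (padVec n x.2) :=
  hγ.comp (measurable_fst.prodMk ((measurable_padVec n).comp measurable_snd))

lemma rdeKernel_apply (hγ : Measurable (Function.uncurry γ)) (μ : Measure S) (ω : Ω) {A : Set S}
    (hA : MeasurableSet A) :
    rdeKernel γ κ μ ω A = Measure.pi (fun _ => μ) ((fun v => γ ω (padVec (κ ω) v)) ⁻¹' A) :=
  Measure.map_apply ((measurable_gamma_padVec hγ _).comp measurable_prodMk_left) hA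

lemma measurable_rdeKernel (hγ : Measurable (Function.uncurry γ)) (hκ : Measurable κ)
    (μ : Measure S) [SigmaFinite μ] : Measurable (rdeKernel γ κ μ) := by
  refine Measure.measurable_of_measurable_coe _ fun A hA => ?_
  simp_rw [rdeKernel_apply hγ μ _ hA]
  have hn (n : ℕ) : Measurable fun ω =>
      Measure.pi (fun _ : Fin n => μ) ((fun v => γ ω (padVec n v)) ⁻¹' A) :=
    measurable_measure_prodMk_left (measurable_gamma_padVec hγ n hA)
  exact (measurable_from_prod_countable_left (f := fun x : Ω × ℕ =>
    Measure.pi (fun _ : Fin x.2 => μ) ((fun v => γ x.1 (padVec x.2 v)) ⁻¹' A)) hn).comp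
      (measurable_id.prodMk hκ)

variable (hγ : Measurable (Function.uncurry γ)) (hκ : Measurable κ) {r : Measure Ω}
include hγ hκ

lemma isProbabilityMeasure_rdeT [IsFiniteMeasure r] (hr : r univ ≠ 0) (μ : Measure S)
    [IsProbabilityMeasure μ] :
    IsProbabilityMeasure (rdeT r γ κ μ) := by
  have : NeZero r := ⟨fun h => hr (by simp [h])⟩
  exact isProbabilityMeasure_bind (measurable_rdeKernel hγ hκ μ).aemeasurable
    (.of_forall fun ω => Measure.isProbabilityMeasure_map
      ((measurable_gamma_padVec hγ _).comp measurable_prodMk_left).aemeasurable)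

lemma rdeT_le_add_tvDist (hr : r univ ≠ 0) (hmom : Integrable (fun ω => (κ ω : ℝ)) r)
    (p q : Measure S) [IsProbabilityMeasure p] [IsProbabilityMeasure q] {A : Set S}
    (hA : MeasurableSet A) :
    rdeT r γ κ p A ≤ rdeT r γ κ q A
      + ENNReal.ofReal ((∫ ω, (κ ω : ℝ) ∂((r univ)⁻¹ • r)) * tvDist p q) := by
  have hint : Integrable (fun ω => (κ ω : ℝ) * tvDist p q) ((r univ)⁻¹ • r) :=
    (hmom.smul_measure (ENNReal.inv_ne_top.2 hr)).mul_const _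
  rw [rdeT_eq_bind, rdeT_eq_bind,
    Measure.bind_apply hA (measurable_rdeKernel hγ hκ p).aemeasurable,
    Measure.bind_apply hA (measurable_rdeKernel hγ hκ q).aemeasurable, ← integral_mul_const,
    ofReal_integral_eq_lintegral_ofReal hint
      (.of_forall fun ω => mul_nonneg (Nat.cast_nonneg _) (tvDist_nonneg_s6 p q)),
    ← lintegral_add_right _ (by fun_prop)]
  refine lintegral_mono fun ω => ?_
  rw [rdeKernel_apply hγ p ω hA, rdeKernel_apply hγ q ω hA]
  exact pi_le_add_tvDist p q (κ ω) ((measurable_gamma_padVec hγ _).comp measurable_prodMk_left hA)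

lemma tvDist_rdeT_le [IsFiniteMeasure r] (hr : r univ ≠ 0)
    (hmom : Integrable (fun ω => (κ ω : ℝ)) r) (p q : Measure S) [IsProbabilityMeasure p]
    [IsProbabilityMeasure q] :
    tvDist (rdeT r γ κ p) (rdeT r γ κ q)
      ≤ (∫ ω, (κ ω : ℝ) ∂((r univ)⁻¹ • r)) * tvDist p q := by
  have := isProbabilityMeasure_rdeT hγ hκ hr p
  have := isProbabilityMeasure_rdeT hγ hκ hr q
  refine tvDist_le_of_measure_le_add _ _
    (mul_nonneg (integral_nonneg fun _ => Nat.cast_nonneg _) (tvDist_nonneg_s6 p q))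
    (fun A hA => rdeT_le_add_tvDist hγ hκ hr hmom p q hA) fun A hA => ?_
  rw [tvDist_comm p q]
  exact rdeT_le_add_tvDist hγ hκ hr hmom q p hA

lemma abs_rdeT_measureReal_sub_le [IsFiniteMeasure r] (hr : r univ ≠ 0)
    (hmom : Integrable (fun ω => (κ ω : ℝ)) r) (p q : Measure S) [IsProbabilityMeasure p]
    [IsProbabilityMeasure q] {A : Set S} (hA : MeasurableSet A) :
    |(rdeT r γ κ p).real A - (rdeT r γ κ q).real A|
      ≤ (∫ ω, (κ ω : ℝ) ∂((r univ)⁻¹ • r)) * tvDist p q := by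
  have := isProbabilityMeasure_rdeT hγ hκ hr p
  have := isProbabilityMeasure_rdeT hγ hκ hr q
  exact (abs_measureReal_sub_le_tvDist _ _ hA).trans (tvDist_rdeT_le hγ hκ hr hmom p q)

end RDE

section MeanField

variable {Ω S : Type*} [MeasurableSpace Ω] [MeasurableSpace S] [Nonempty S] {r : Measure Ω}
  {γ : Ω → (ℕ → S) → S} {κ : Ω → ℕ} {μ ν : ℝ → Measure S}

lemma SolvesMeanField.hasDerivAt_measureReal (hμ : SolvesMeanField r γ κ μ) {A : Set S}
    (hA : MeasurableSet A) {t : ℝ} (ht : 0 ≤ t) :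
    HasDerivAt (fun s => (μ s).real A)
      ((r univ).toReal * ((rdeT r γ κ (μ t)).real A - (μ t).real A)) t := by
  have hφ : ∀ x, |A.indicator (1 : S → ℝ) x| ≤ 1 := fun x => by
    by_cases hx : x ∈ A <;> simp [hx]
  simpa only [integral_indicator_one hA] using
    hμ.2 (A.indicator 1) (measurable_one.indicator hA) ⟨1, hφ⟩ t ht

lemma SolvesMeanField.hasDerivAt_exp_mul_measureReal_sub (hμ : SolvesMeanField r γ κ μ)
    (hν : SolvesMeanField r γ κ ν) {A : Set S} (hA : MeasurableSet A) {t : ℝ} (ht : 0 ≤ t) :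
    HasDerivAt (fun s => Real.exp ((r univ).toReal * s) * ((μ s).real A - (ν s).real A))
      (Real.exp ((r univ).toReal * t) * (r univ).toReal
        * ((rdeT r γ κ (μ t)).real A - (rdeT r γ κ (ν t)).real A)) t := by
  have hexp : HasDerivAt (fun s => Real.exp ((r univ).toReal * s))
      (Real.exp ((r univ).toReal * t) * (r univ).toReal) t := by
    simpa using ((hasDerivAt_id t).const_mul (r univ).toReal).exp
  refine (hexp.mul ((hμ.hasDerivAt_measureReal hA ht).sub
    (hν.hasDerivAt_measureReal hA ht))).congr_deriv ?_
  simp only [Pi.sub_apply]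
  ring

theorem SolvesMeanField.exp_mul_tvDist_le [IsFiniteMeasure r] (hr : r univ ≠ 0)
    (hγ : Measurable (Function.uncurry γ)) (hκ : Measurable κ)
    (hmom : Integrable (fun ω => (κ ω : ℝ)) r)
    (hμ : SolvesMeanField r γ κ μ) (hν : SolvesMeanField r γ κ ν) {t : ℝ} (ht : 0 ≤ t) :
    Real.exp ((r univ).toReal * t) * tvDist (μ t) (ν t)
      ≤ tvDist (μ 0) (ν 0) * Real.exp ((∫ ω, (κ ω : ℝ) ∂r) * t) := by
  set c := (r univ).toReal
  set m := ∫ ω, (κ ω : ℝ) ∂((r univ)⁻¹ • r)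
  have hcm : c * m = ∫ ω, (κ ω : ℝ) ∂r := by
    simp only [c, m, integral_smul_measure, smul_eq_mul, ENNReal.toReal_inv, ← mul_assoc,
      mul_inv_cancel₀ (ENNReal.toReal_ne_zero.2 ⟨hr, measure_ne_top r _⟩), one_mul]
  have hc : 0 ≤ c := ENNReal.toReal_nonneg
  have hm : 0 ≤ m := integral_nonneg fun _ => Nat.cast_nonneg _
  have hf (A : {A : Set S // MeasurableSet A}) (s) (hs : s ∈ Icc 0 t) :=
    (hμ.hasDerivAt_exp_mul_measureReal_sub hν A.2 hs.1).hasDerivWithinAt (s := Icc 0 t)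
  have hd (s) (hs : s ∈ Icc 0 t) :=
    have := hμ.1 s hs.1; have := hν.1 s hs.1
    isLUB_abs_mul_tvDist (μ s) (ν s) (Real.exp_pos (c * s)).le
  have hK (A : {A : Set S // MeasurableSet A}) (s) (hs : s ∈ Icc 0 t) :
      |Real.exp (c * s) * c * ((rdeT r γ κ (μ s)).real A - (rdeT r γ κ (ν s)).real A)|
        ≤ c * m * (Real.exp (c * s) * tvDist (μ s) (ν s)) := by
    have := hμ.1 s hs.1
    have := hν.1 s hs.1
    rw [abs_mul, abs_of_nonneg (by positivity)]
    calc _ ≤ Real.exp (c * s) * c * (m * tvDist (μ s) (ν s)) := by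
          gcongr
          exact abs_rdeT_measureReal_sub_le hγ hκ hr hmom _ _ A.2
      _ = c * m * (Real.exp (c * s) * tvDist (μ s) (ν s)) := by ring
  have hL (A : {A : Set S // MeasurableSet A}) (s) (hs : s ∈ Icc 0 t) :
      |Real.exp (c * s) * c * ((rdeT r γ κ (μ s)).real A - (rdeT r γ κ (ν s)).real A)|
        ≤ c * m * Real.exp (c * t) := by
    have := hμ.1 s hs.1
    have := hν.1 s hs.1
    refine (hK A s hs).trans (mul_le_mul_of_nonneg_left ?_ (mul_nonneg hc hm))
    calc _ ≤ Real.exp (c * t) * 1 := by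
          gcongr
          exacts [tvDist_nonneg_s6 _ _, hs.2, tvDist_le_one _ _]
      _ = _ := mul_one _
  simpa [hcm] using le_mul_exp_of_isLUB_abs_of_abs_deriv_le (mul_nonneg hc hm) ht
    (continuousOn_of_isLUB_abs_of_abs_deriv_le (convex_Icc 0 t) hf hd hL) hf hd hK

end MeanField

theorem stmt6_general {Ω S : Type*} [MeasurableSpace Ω] [MeasurableSpace S] [Nonempty S]
    (r : Measure Ω) [IsFiniteMeasure r] (hr : r Set.univ ≠ 0)
    (γ : Ω → (ℕ → S) → S) (hγ : Measurable (Function.uncurry γ))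
    (κ : Ω → ℕ) (hκ : Measurable κ)
    (hmom : Integrable (fun ω => (κ ω : ℝ)) r)
    (μ ν : ℝ → Measure S)
    (hμ : SolvesMeanField r γ κ μ) (hν : SolvesMeanField r γ κ ν) :
    ∀ t : ℝ, 0 ≤ t →
      tvDist (μ t) (ν t) ≤
        Real.exp ((∫ ω, ((κ ω : ℝ) - 1) ∂r) * t) * tvDist (μ 0) (ν 0) := by
  intro t ht
  have hK : ∫ ω, ((κ ω : ℝ) - 1) ∂r = ∫ ω, (κ ω : ℝ) ∂r - (r univ).toReal := by
    simp [integral_sub hmom (integrable_const 1), measureReal_def]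
  rw [hK, sub_mul, Real.exp_sub, div_mul_eq_mul_div, le_div_iff₀ (Real.exp_pos _)]
  linarith [hμ.exp_mul_tvDist_le hr hγ hκ hmom hν ht]

/-- Contraction property of the mean-field semigroup: solutions `T_t(μ) = μ_t` of the
mean-field equation satisfy `‖T_t(μ) - T_t(ν)‖ ≤ e^{Kt} ‖μ - ν‖` with
`K = ∫ (κ(ω) - 1) r(dω)`; in particular for `K < 0` the semigroup is a strict
contraction in total variation. -/
theorem stmt6 {Ω S : Type*} [MeasurableSpace Ω] [MeasurableSpace S] [Nonempty S]
    (r : Measure Ω) [IsFiniteMeasure r] (hr : r Set.univ ≠ 0)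
    (γ : Ω → (ℕ → S) → S) (hγ : Measurable (Function.uncurry γ))
    (κ : Ω → ℕ) (hκ : Measurable κ)
    (hdep : ∀ ω, ∀ x y : ℕ → S, (∀ i < κ ω, x i = y i) → γ ω x = γ ω y)
    (hmom : Integrable (fun ω => (κ ω : ℝ)) r)
    (μ ν : ℝ → Measure S)
    (hμ : SolvesMeanField r γ κ μ) (hν : SolvesMeanField r γ κ ν) :
    ∀ t : ℝ, 0 ≤ t →
      tvDist (μ t) (ν t) ≤
        Real.exp ((∫ ω, ((κ ω : ℝ) - 1) ∂r) * t) * tvDist (μ 0) (ν 0) :=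
  stmt6_general r hr γ hγ κ hκ hmom μ ν hμ hν
end

section
/- Let α > 4 and z_mid = 1/2 - √(1/4 - 1/α). The cubic function R(r) = α[r² - 2(r - z_mid)²](1-r) - r has exactly three real zeros r_low < r_mid < r_upp with r_low = z_mid < r_mid ≤ 2 z_mid < r_upp, and R > 0 on (z_mid, r_mid) and R < 0 on (r_mid, r_upp). -/
/-- For `α > 4` and `z_mid = 1/2 - √(1/4 - 1/α)`, the cubic
`R(r) = α[r² - 2(r - z_mid)²](1-r) - r` has exactly three real zeros
`r_low < r_mid < r_upp` with `r_low = z_mid < r_mid ≤ 2 z_mid < r_upp`, and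
`R > 0` on `(z_mid, r_mid)` and `R < 0` on `(r_mid, r_upp)`. -/
theorem stmt8 (α : ℝ) (hα : 4 < α) (zmid : ℝ)
    (hz : zmid = 1 / 2 - Real.sqrt (1 / 4 - 1 / α)) :
    ∃ rmid rupp : ℝ,
      zmid < rmid ∧ rmid ≤ 2 * zmid ∧ 2 * zmid < rupp ∧
      {r : ℝ | α * (r ^ 2 - 2 * (r - zmid) ^ 2) * (1 - r) - r = 0} =
        {zmid, rmid, rupp} ∧
      (∀ r ∈ Set.Ioo zmid rmid,
        0 < α * (r ^ 2 - 2 * (r - zmid) ^ 2) * (1 - r) - r) ∧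
      (∀ r ∈ Set.Ioo rmid rupp,
        α * (r ^ 2 - 2 * (r - zmid) ^ 2) * (1 - r) - r < 0) := by
  have hα0 : (0:ℝ) < α := by linarith
  have hpos : (0:ℝ) < 1/4 - 1/α := by
    have h14 : 1/α < 1/4 := by
      rw [div_lt_div_iff₀ hα0 (by norm_num : (0:ℝ) < 4)]; linarith
    linarith
  set s := Real.sqrt (1/4 - 1/α) with hsdef
  have hs2 : s^2 = 1/4 - 1/α := Real.sq_sqrt hpos.le
  have hs0 : 0 < s := Real.sqrt_pos.mpr hpos
  have hinv : 0 < 1/α := by positivity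
  have hslt : s < 1/2 := by nlinarith [hs2, hs0, hinv]
  have hz' : zmid = 1/2 - s := by rw [hz]
  have hz0 : 0 < zmid := by rw [hz']; linarith
  have hz12 : zmid < 1/2 := by rw [hz']; linarith
  have h1 : α * (zmid * (1 - zmid)) = 1 := by
    have hzz : zmid * (1 - zmid) = 1/α := by rw [hz']; nlinarith
    rw [hzz]; field_simp
  set D := Real.sqrt (9*zmid^2 - 2*zmid + 1) with hDdef
  have hDnn : 0 ≤ 9*zmid^2 - 2*zmid + 1 := by nlinarith [sq_nonneg (zmid - 1)]
  have hD2 : D^2 = 9*zmid^2 - 2*zmid + 1 := Real.sq_sqrt hDnn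
  have hD0 : 0 ≤ D := Real.sqrt_nonneg _
  have hDpos : 0 < D := by nlinarith
  have hDlt : D < 1 + zmid := by nlinarith
  have hDge : 1 - zmid ≤ D := by nlinarith
  set rmid := (1 + 3*zmid - D)/2 with hrmid
  set rupp := (1 + 3*zmid + D)/2 with hrupp
  have hfact : ∀ r : ℝ, α * (r ^ 2 - 2 * (r - zmid) ^ 2) * (1 - r) - r
      = α * (r - zmid) * (r - rmid) * (r - rupp) := by
    intro r
    rw [hrmid, hrupp]
    linear_combination r * h1 + (r - zmid) * (α/4) * hD2
  have hzm : zmid < rmid := by rw [hrmid]; linarith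
  have hm2 : rmid ≤ 2 * zmid := by rw [hrmid]; linarith
  have h2u : 2 * zmid < rupp := by rw [hrupp]; linarith
  have hmu : rmid < rupp := by rw [hrmid, hrupp]; linarith
  refine ⟨rmid, rupp, hzm, hm2, h2u, ?_, ?_, ?_⟩
  · ext r
    simp only [Set.mem_setOf_eq, Set.mem_insert_iff, Set.mem_singleton_iff]
    rw [hfact r]
    simp only [mul_eq_zero, sub_eq_zero, hα0.ne', false_or]
    tauto
  · intro r hr
    obtain ⟨h1r, h2r⟩ := hr
    rw [hfact r]
    have hp : 0 < α * (r - zmid) := mul_pos hα0 (by linarith)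
    have hn : 0 < (r - rmid) * (r - rupp) :=
      mul_pos_of_neg_of_neg (by linarith) (by linarith)
    linarith [mul_pos hp hn]
  · intro r hr
    obtain ⟨h1r, h2r⟩ := hr
    rw [hfact r]
    have hp : 0 < α * (r - zmid) * (r - rmid) :=
      mul_pos (mul_pos hα0 (by linarith)) (by linarith)
    exact mul_neg_of_pos_of_neg hp (by linarith)
end

section
/- For α > 4 and z_mid defined by α z_mid(1 - z_mid) = 1 with z_mid = 1/2 - √(1/4 - 1/α), all solutions (p_t, r_t) of the planar ODE system dp/dt = α p²(1-p) - p, dr/dt = α[r² - 2(r-p)²](1-r) - r starting in D = {(p,r) : 0 ≤ p ≤ 1, p ≤ r ≤ min(1, 2p)} with p_0 = z_mid and r_0 > z_mid converge as t → ∞ to (z_mid, r_mid), where r_mid > z_mid is the middle zero of r ↦ α[r² - 2(r - z_mid)²](1-r) - r. -/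
/-!
Since `z_mid` is an equilibrium of the `p`-equation and the vector field is locally Lipschitz,
`p ≡ z_mid`. The `r`-equation then becomes autonomous, `r' = G r` with
`G r = α (r - z_mid) (r - r_mid) (r - r_big)` and `z_mid < r_mid < 2 z_mid < 1 < r_big`.
On `(z_mid, 1]` the sign of `G r` is opposite to that of `r - r_mid`, so `r` moves monotonically
towards `r_mid` without ever reaching it (by uniqueness), and its limit, being an equilibrium,
is `r_mid`.
-/

open Filter Set Topology

theorem eqOn_const_of_hasDerivAt_of_eq_zero {G y : ℝ → ℝ} {a b t₀ c : ℝ}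
    (hG : ContDiff ℝ 1 G) (hc : G c = 0) (hd : ∀ t ∈ Icc a b, HasDerivAt y (G (y t)) t)
    (ht₀ : t₀ ∈ Icc a b) (hy : y t₀ = c) : EqOn y (fun _ ↦ c) (Icc a b) := by
  have hcont : ContinuousOn y (Icc a b) := fun t ht ↦ (hd t ht).continuousAt.continuousWithinAt
  set s := insert c (y '' Icc a b)
  obtain ⟨K, hK⟩ :=
    (hG.locallyLipschitz.locallyLipschitzOn (s := s)).exists_lipschitzOnWith_of_compact
    ((isCompact_Icc.image_of_continuousOn hcont).insert c)
  have hys : ∀ t ∈ Icc a b, y t ∈ s := fun t ht ↦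
    mem_insert_of_mem _ (mem_image_of_mem y ht)
  have hconst : ∀ t, HasDerivAt (fun _ : ℝ ↦ c) (G c) t := fun t ↦
    hc ▸ hasDerivAt_const t c
  intro t ht
  rcases le_total t₀ t with h | h
  · have hsub : Icc t₀ b ⊆ Icc a b := Icc_subset_Icc_left ht₀.1
    exact ODE_solution_unique_of_mem_Icc_right (v := fun _ ↦ G) (s := fun _ ↦ s)
      (fun _ _ ↦ hK) (hcont.mono hsub)
      (fun u hu ↦ (hd u (hsub (Ico_subset_Icc_self hu))).hasDerivWithinAt)
      (fun u hu ↦ hys u (hsub (Ico_subset_Icc_self hu))) continuousOn_const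
      (fun u _ ↦ (hconst u).hasDerivWithinAt) (fun _ _ ↦ mem_insert c _) hy ⟨h, ht.2⟩
  · have hsub : Icc a t₀ ⊆ Icc a b := Icc_subset_Icc_right ht₀.2
    exact ODE_solution_unique_of_mem_Icc_left (v := fun _ ↦ G) (s := fun _ ↦ s)
      (fun _ _ ↦ hK) (hcont.mono hsub)
      (fun u hu ↦ (hd u (hsub (Ioc_subset_Icc_self hu))).hasDerivWithinAt)
      (fun u hu ↦ hys u (hsub (Ioc_subset_Icc_self hu))) continuousOn_const
      (fun u _ ↦ (hconst u).hasDerivWithinAt) (fun _ _ ↦ mem_insert c _) hy ⟨ht.1, h⟩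

theorem le_of_hasDerivAt_of_pos {G y : ℝ → ℝ} {m : ℝ}
    (hd : ∀ t ≥ 0, HasDerivAt y (G (y t)) t) (hm : 0 < G m) (h0 : m ≤ y 0) :
    ∀ t ≥ 0, m ≤ y t := by
  intro t ht
  have := image_le_of_deriv_right_lt_deriv_boundary'
    (f := fun u ↦ -y u) (f' := fun u ↦ -G (y u))
    (fun u hu ↦ (hd u hu.1).continuousAt.neg.continuousWithinAt)
    (fun u hu ↦ (hd u hu.1).neg.hasDerivWithinAt) (B := fun _ ↦ -m) (B' := fun _ ↦ 0)
    (neg_le_neg h0) continuousOn_const (fun u _ ↦ hasDerivWithinAt_const _ _ _)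
    (fun u _ hu ↦ by rw [neg_inj] at hu; rwa [hu, neg_lt_zero]) ⟨ht, le_rfl⟩
  exact neg_le_neg_iff.1 this

theorem eq_zero_of_hasDerivAt_of_tendsto {G y : ℝ → ℝ} {L : ℝ} (hG : ContinuousAt G L)
    (hd : ∀ t ≥ 0, HasDerivAt y (G (y t)) t) (hy : Tendsto y atTop (𝓝 L)) : G L = 0 := by
  have hmvt : ∀ t ≥ (0 : ℝ), ∃ ξ ∈ Ioo t (t + 1), G (y ξ) = y (t + 1) - y t := by
    intro t ht
    obtain ⟨ξ, hξ, h⟩ := exists_hasDerivAt_eq_slope y (fun u ↦ G (y u)) (lt_add_one t)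
      (fun u hu ↦ (hd u (ht.trans hu.1)).continuousAt.continuousWithinAt)
      (fun u hu ↦ hd u (ht.trans hu.1.le))
    exact ⟨ξ, hξ, by simpa using h⟩
  choose! ξ hξ hGξ using hmvt
  have hξ_top : Tendsto ξ atTop atTop :=
    tendsto_atTop_mono' _ ((eventually_ge_atTop 0).mono fun t ht ↦ (hξ t ht).1.le) tendsto_id
  have hlhs : Tendsto (fun t ↦ G (y (ξ t))) atTop (𝓝 (G L)) :=
    hG.tendsto.comp (hy.comp hξ_top)
  have hrhs : Tendsto (fun t ↦ y (t + 1) - y t) atTop (𝓝 (L - L)) :=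
    (hy.comp (tendsto_atTop_add_const_right _ 1 tendsto_id)).sub hy
  rw [sub_self] at hrhs
  exact tendsto_nhds_unique (hlhs.congr' ((eventually_ge_atTop 0).mono hGξ)) hrhs

theorem tendsto_of_hasDerivAt_of_lt {G y : ℝ → ℝ} {c : ℝ} (hG : ContDiff ℝ 1 G)
    (hd : ∀ t ≥ 0, HasDerivAt y (G (y t)) t) (hc : G c = 0) (hy0 : y 0 < c)
    (hpos : ∀ x ∈ Ico (y 0) c, 0 < G x) : Tendsto y atTop (𝓝 c) := by
  have hcont : ContinuousOn y (Ici 0) := fun t ht ↦ (hd t ht).continuousAt.continuousWithinAt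
  have hlow : ∀ t ≥ 0, y 0 ≤ y t :=
    le_of_hasDerivAt_of_pos hd (hpos _ ⟨le_rfl, hy0⟩) le_rfl
  -- by uniqueness, a solution that reached the equilibrium `c` would have started there
  have hup : ∀ t ≥ 0, y t < c := by
    intro t ht
    by_contra! h
    obtain ⟨u, hu, hyu⟩ :=
      intermediate_value_Icc ht (hcont.mono Icc_subset_Ici_self) ⟨hy0.le, h⟩
    exact hy0.ne (eqOn_const_of_hasDerivAt_of_eq_zero hG hc (fun v hv ↦ hd v hv.1) hu hyu
      ⟨le_rfl, ht⟩)
  have hmono : Monotone fun t : Ici (0 : ℝ) ↦ y t := fun s t hst ↦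
    monotoneOn_of_hasDerivWithinAt_nonneg (convex_Ici 0) hcont
      (fun u hu ↦ (hd u (interior_subset hu)).hasDerivWithinAt)
      (fun u hu ↦ (hpos _ ⟨hlow u (interior_subset hu), hup u (interior_subset hu)⟩).le)
      s.2 t.2 hst
  have hL := tendsto_atTop_ciSup hmono ⟨c, by rintro _ ⟨t, rfl⟩; exact (hup t t.2).le⟩
  rw [tendsto_comp_val_Ici_atTop] at hL
  set L := ⨆ t : Ici (0 : ℝ), y t
  have hL_le : L ≤ c := le_of_tendsto hL ((eventually_ge_atTop 0).mono fun t ht ↦ (hup t ht).le)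
  have hL_ge : y 0 ≤ L := ge_of_tendsto hL ((eventually_ge_atTop 0).mono hlow)
  rcases hL_le.eq_or_lt with h | h
  · rwa [h] at hL
  · exact absurd (eq_zero_of_hasDerivAt_of_tendsto hG.continuous.continuousAt hd hL)
      (hpos L ⟨hL_ge, h⟩).ne'

theorem tendsto_of_hasDerivAt_of_mul_sub_neg {G y : ℝ → ℝ} {c : ℝ} (hG : ContDiff ℝ 1 G)
    (hd : ∀ t ≥ 0, HasDerivAt y (G (y t)) t) (hc : G c = 0)
    (hsign : ∀ x ∈ uIcc (y 0) c, x ≠ c → G x * (x - c) < 0) : Tendsto y atTop (𝓝 c) := by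
  rcases lt_trichotomy (y 0) c with h | h | h
  · exact tendsto_of_hasDerivAt_of_lt hG hd hc h fun x hx ↦ pos_of_mul_neg_left
      (hsign x (Icc_subset_uIcc ⟨hx.1, hx.2.le⟩) hx.2.ne) (sub_nonpos.2 hx.2.le)
  · refine tendsto_const_nhds.congr' ((eventually_ge_atTop 0).mono fun t ht ↦ ?_)
    exact (eqOn_const_of_hasDerivAt_of_eq_zero hG hc (fun u hu ↦ hd u hu.1) ⟨le_rfl, ht⟩ h
      ⟨ht, le_rfl⟩).symm
  · have hneg := tendsto_of_hasDerivAt_of_lt (G := fun x ↦ -G (-x)) (y := fun t ↦ -y t)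
      (c := -c) (hG.comp contDiff_neg).neg
      (fun t ht ↦ (hd t ht).neg.congr_deriv (by rw [neg_neg]))
      (by simpa using hc) (neg_lt_neg h) fun x hx ↦ by
        have hx' : c < -x ∧ -x ≤ y 0 := ⟨lt_neg_of_lt_neg hx.2, neg_le.1 hx.1⟩
        exact neg_pos.2 (neg_of_mul_neg_left (hsign (-x) (Icc_subset_uIcc' ⟨hx'.1.le, hx'.2⟩)
          hx'.1.ne') (sub_nonneg.2 hx'.1.le))
    simpa using hneg.neg

theorem half_sub_sqrt_spec {α z : ℝ} (hα : 4 < α) (hz : z = 1 / 2 - √(1 / 4 - 1 / α)) :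
    0 < z ∧ z < 1 / 2 ∧ α * z * (1 - z) = 1 := by
  have hα0 : 0 < α := by linarith
  have hd : 0 < 1 / 4 - 1 / α := by
    have := one_div_lt_one_div_of_lt (by norm_num) hα
    linarith
  have hs := Real.sq_sqrt hd.le
  have hs1 : √(1 / 4 - 1 / α) < 1 / 2 := by
    rw [Real.sqrt_lt' (by norm_num)]
    linarith [one_div_pos.2 hα0]
  have hzz : z * (1 - z) = 1 / α := by rw [hz]; linear_combination -hs
  refine ⟨by linarith, by linarith [Real.sqrt_pos.2 hd], ?_⟩
  rw [mul_assoc, hzz, mul_one_div_cancel hα0.ne']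

theorem exists_attracting_zero {α z : ℝ} (hz0 : 0 < z) (hz1 : z < 1 / 2)
    (hαz : α * z * (1 - z) = 1) :
    ∃ rm ∈ Ioo z (2 * z), α * (rm ^ 2 - 2 * (rm - z) ^ 2) * (1 - rm) - rm = 0 ∧
      ∀ x ∈ Ioc z 1, x ≠ rm →
        (α * (x ^ 2 - 2 * (x - z) ^ 2) * (1 - x) - x) * (x - rm) < 0 := by
  have hα : 0 < α := by nlinarith [mul_pos hz0 (by linarith : (0 : ℝ) < 1 - z)]
  have hD : 0 < 9 * z ^ 2 - 2 * z + 1 := by nlinarith [sq_nonneg (3 * z - 1 / 3)]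
  set s := √(9 * z ^ 2 - 2 * z + 1)
  have hs : s ^ 2 = 9 * z ^ 2 - 2 * z + 1 := Real.sq_sqrt hD.le
  set rm := (1 + 3 * z - s) / 2 with hrm_def
  set rb := (1 + 3 * z + s) / 2 with hrb_def
  -- `z` is a zero of the cubic; `rm`, `rb` are the roots of the quotient `x² - (1 + 3z) x + 2z`
  have hfactor : ∀ x, α * (x ^ 2 - 2 * (x - z) ^ 2) * (1 - x) - x
      = α * (x - z) * (x - rm) * (x - rb) := fun x ↦ by
    linear_combination x * hαz + (α * (x - z) / 4) * hs
  have hzrm : z < rm := by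
    have : s < 1 + z := (Real.sqrt_lt' (by linarith)).2 (by nlinarith)
    linarith [hrm_def]
  have hrm : rm < 2 * z := by
    have : 1 - z < s := (Real.lt_sqrt (by linarith)).2 (by nlinarith)
    linarith [hrm_def]
  have hrb : 1 < rb := by linarith [hrb_def]
  refine ⟨rm, ⟨hzrm, hrm⟩, by rw [hfactor]; ring, fun x hx hne ↦ ?_⟩
  have hxz : 0 < x - z := sub_pos.2 hx.1
  have hxrb : 0 < rb - x := sub_pos.2 (hx.2.trans_lt hrb)
  have hxrm : 0 < (x - rm) ^ 2 := pow_two_pos_of_ne_zero (sub_ne_zero.2 hne)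
  calc (α * (x ^ 2 - 2 * (x - z) ^ 2) * (1 - x) - x) * (x - rm)
      = -(α * (x - z) * (x - rm) ^ 2 * (rb - x)) := by rw [hfactor]; ring
    _ < 0 := neg_neg_of_pos (by positivity)

/-- For `α > 4` and `z_mid = 1/2 - √(1/4 - 1/α)` (so `α z_mid(1-z_mid) = 1`), every
solution of the planar ODE `dp/dt = αp²(1-p) - p`, `dr/dt = α[r² - 2(r-p)²](1-r) - r`
started in `D = {(p,r) : 0 ≤ p ≤ 1, p ≤ r ≤ min(1, 2p)}` with `p₀ = z_mid` and
`r₀ > z_mid` converges as `t → ∞` to `(z_mid, r_mid)`, where `r_mid ∈ (z_mid, 2 z_mid]`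
is the middle zero of `r ↦ α[r² - 2(r - z_mid)²](1-r) - r`. -/
theorem stmt9 (α : ℝ) (hα : 4 < α) (zmid : ℝ)
    (hz : zmid = 1 / 2 - Real.sqrt (1 / 4 - 1 / α))
    (p r : ℝ → ℝ)
    (hodep : ∀ t ≥ (0:ℝ), HasDerivAt p (α * (p t) ^ 2 * (1 - p t) - p t) t)
    (hoder : ∀ t ≥ (0:ℝ),
      HasDerivAt r (α * ((r t) ^ 2 - 2 * (r t - p t) ^ 2) * (1 - r t) - r t) t)
    (hD : 0 ≤ p 0 ∧ p 0 ≤ 1 ∧ p 0 ≤ r 0 ∧ r 0 ≤ min 1 (2 * p 0))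
    (hp0 : p 0 = zmid) (hr0 : zmid < r 0) :
    ∃ rmid ∈ Set.Ioc zmid (2 * zmid),
      α * (rmid ^ 2 - 2 * (rmid - zmid) ^ 2) * (1 - rmid) - rmid = 0 ∧
      Tendsto (fun t => (p t, r t)) atTop (nhds (zmid, rmid)) := by
  obtain ⟨hz0, hz1, hαz⟩ := half_sub_sqrt_spec hα hz
  have hp : ∀ t ≥ (0 : ℝ), p t = zmid := fun t ht ↦
    eqOn_const_of_hasDerivAt_of_eq_zero (G := fun x ↦ α * x ^ 2 * (1 - x) - x) (by fun_prop)
      (by linear_combination zmid * hαz) (fun u hu ↦ hodep u hu.1) ⟨le_rfl, ht⟩ hp0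
      ⟨ht, le_rfl⟩
  obtain ⟨rmid, hrmid, hroot, hsign⟩ := exists_attracting_zero hz0 hz1 hαz
  have hr1 : r 0 ≤ 1 := (le_min_iff.1 hD.2.2.2).1
  have hr_lim : Tendsto r atTop (𝓝 rmid) := by
    refine tendsto_of_hasDerivAt_of_mul_sub_neg
      (G := fun x ↦ α * (x ^ 2 - 2 * (x - zmid) ^ 2) * (1 - x) - x) (by fun_prop)
      (fun t ht ↦ hp t ht ▸ hoder t ht) hroot fun x hx hne ↦ hsign x ?_ hne
    rcases mem_uIcc.1 hx with hx | hx <;> constructor <;> linarith [hrmid.1, hrmid.2]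
  have hp_lim : Tendsto p atTop (𝓝 zmid) :=
    tendsto_const_nhds.congr' ((eventually_ge_atTop 0).mono fun t ht ↦ (hp t ht).symm)
  exact ⟨rmid, ⟨hrmid.1, hrmid.2.le⟩, hroot, hp_lim.prodMk_nhds hr_lim⟩
end

section
/- Sup over all p ∈ ℝ of R_{α,p}(r) = α[r² - 2(r-p)²](1-r) - r is negative for every r with z_upp < r ≤ 1, where z_upp = 1/2 + √(1/4 - 1/α) and α ≥ 4. Consequently, any solution of the bivariate ODE satisfies limsup_{t→∞} r_t ≤ z_upp. -/
open Filter Topology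

private lemma decay10 {f f' : ℝ → ℝ} {a b m : ℝ} (hab : a ≤ b)
    (hd : ∀ t ∈ Set.Icc a b, HasDerivAt f (f' t) t)
    (hm : ∀ t ∈ Set.Icc a b, f' t ≤ m) : f b ≤ f a + m * (b - a) := by
  set g : ℝ → ℝ := fun t => f t - m * t with hgdef
  have hg' : ∀ t ∈ Set.Icc a b, HasDerivAt g (f' t - m) t := by
    intro t ht
    have h1 : HasDerivAt (fun x : ℝ => m * x) m t := by
      simpa using (hasDerivAt_id t).const_mul m
    exact (hd t ht).sub h1
  have hanti : AntitoneOn g (Set.Icc a b) := by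
    apply antitoneOn_of_deriv_nonpos (convex_Icc a b)
    · exact fun t ht => ((hg' t ht).continuousAt).continuousWithinAt
    · intro t ht
      rw [interior_Icc] at ht
      exact ((hg' t (Set.Ioo_subset_Icc_self ht)).differentiableAt).differentiableWithinAt
    · intro t ht
      rw [interior_Icc] at ht
      have := (hg' t (Set.Ioo_subset_Icc_self ht)).deriv
      rw [this]
      linarith [hm t (Set.Ioo_subset_Icc_self ht)]
  have := hanti (Set.left_mem_Icc.2 hab) (Set.right_mem_Icc.2 hab) hab
  simp only [hgdef] at this
  linarith

private lemma Pneg10 (α : ℝ) (hα : 4 ≤ α) (r : ℝ)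
    (hr : 1 / 2 + Real.sqrt (1 / 4 - 1 / α) < r) : α * r ^ 2 * (1 - r) - r < 0 := by
  have hα0 : (0:ℝ) < α := by linarith
  have hnn : (0:ℝ) ≤ 1 / 4 - 1 / α := by
    have h1 : 1 / α ≤ 1 / 4 := by
      rw [div_le_div_iff₀ hα0 (by norm_num)]; linarith
    linarith
  set s := Real.sqrt (1 / 4 - 1 / α) with hs
  have hs0 : 0 ≤ s := Real.sqrt_nonneg _
  have hs2 : s ^ 2 = 1 / 4 - 1 / α := Real.sq_sqrt hnn
  have hinv : α * (1 / α) = 1 := mul_one_div_cancel hα0.ne'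
  have hr0 : 0 < r := by linarith
  have h3 : 0 < r ^ 2 - r + 1 / α := by nlinarith
  have h4 : 0 < α * r ^ 2 - α * r + 1 := by nlinarith [mul_pos hα0 h3]
  nlinarith [mul_pos hr0 h4]

/-- For `α ≥ 4` and `z_upp = 1/2 + √(1/4 - 1/α)`, the supremum over `p ∈ ℝ` of
`R_{α,p}(r) = α[r² - 2(r-p)²](1-r) - r` is negative for every `r ∈ (z_upp, 1]`.
Consequently any solution of the bivariate mean-field ODE staying in the domain `D`
satisfies `limsup_{t→∞} r_t ≤ z_upp`. -/
theorem stmt10 (α : ℝ) (hα : 4 ≤ α) (zupp : ℝ)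
    (hz : zupp = 1 / 2 + Real.sqrt (1 / 4 - 1 / α)) :
    (∀ r : ℝ, zupp < r → r ≤ 1 →
      (⨆ p : ℝ, α * (r ^ 2 - 2 * (r - p) ^ 2) * (1 - r) - r) < 0) ∧
    (∀ p r : ℝ → ℝ,
      (∀ t ≥ (0:ℝ), HasDerivAt p (α * (p t) ^ 2 * (1 - p t) - p t) t) →
      (∀ t ≥ (0:ℝ),
        HasDerivAt r (α * ((r t) ^ 2 - 2 * (r t - p t) ^ 2) * (1 - r t) - r t) t) →
      (∀ t ≥ (0:ℝ), 0 ≤ p t ∧ p t ≤ 1 ∧ p t ≤ r t ∧ r t ≤ min 1 (2 * p t)) →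
      limsup r atTop ≤ zupp) := by
  have hα0 : (0:ℝ) < α := by linarith
  have hzl : 1 / 2 ≤ zupp := by
    rw [hz]; linarith [Real.sqrt_nonneg (1 / 4 - 1 / α)]
  constructor
  · intro r hr hr1
    have hub : ∀ q : ℝ, α * (r ^ 2 - 2 * (r - q) ^ 2) * (1 - r) - r ≤ α * r ^ 2 * (1 - r) - r := by
      intro q
      have h1r : (0:ℝ) ≤ 1 - r := by linarith
      nlinarith [mul_nonneg (mul_nonneg hα0.le (sq_nonneg (r - q))) h1r]
    exact lt_of_le_of_lt (ciSup_le hub) (Pneg10 α hα r (hz ▸ hr))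
  · intro p r hp hr hdom
    have hcb : IsCoboundedUnder (· ≤ ·) atTop r := by
      apply isCoboundedUnder_le_of_eventually_le atTop (x := 0)
      filter_upwards [eventually_ge_atTop (0:ℝ)] with t ht
      exact le_trans (hdom t ht).1 (hdom t ht).2.2.1
    have hr1 : ∀ t ≥ (0:ℝ), r t ≤ 1 := fun t ht =>
      le_trans (hdom t ht).2.2.2 (min_le_left _ _)
    apply le_of_forall_gt_imp_ge_of_dense
    intro c hc
    by_cases hc1 : 1 ≤ c
    · apply limsup_le_of_le hcb
      filter_upwards [eventually_ge_atTop (0:ℝ)] with t ht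
      exact le_trans (hr1 t ht) hc1
    · push_neg at hc1
      have hc0 : 0 < c := by linarith
      have hPc : α * c ^ 2 * (1 - c) - c < 0 := Pneg10 α hα c (hz ▸ hc)
      have hδ : 0 < 1 - α * c * (1 - c) := by nlinarith
      set ε := c * (1 - α * c * (1 - c)) with hεdef
      have hε : 0 < ε := mul_pos hc0 hδ
      -- key derivative bound
      have key : ∀ t, 0 ≤ t → c ≤ r t →
          α * ((r t) ^ 2 - 2 * (r t - p t) ^ 2) * (1 - r t) - r t ≤ -ε := by
        intro t ht hct
        set x := r t
        have hx1 : x ≤ 1 := hr1 t ht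
        have h1x : (0:ℝ) ≤ 1 - x := by linarith
        have hA : α * (x ^ 2 - 2 * (x - p t) ^ 2) * (1 - x) - x ≤ α * x ^ 2 * (1 - x) - x := by
          nlinarith [mul_nonneg (mul_nonneg hα0.le (sq_nonneg (x - p t))) h1x]
        have hxc : x * (1 - x) ≤ c * (1 - c) := by nlinarith
        have hB : α * x ^ 2 * (1 - x) - x ≤ -ε := by
          have h1 : α * x * (1 - x) - 1 ≤ α * c * (1 - c) - 1 := by nlinarith
          have h2 : x * (α * x * (1 - x) - 1) ≤ x * (α * c * (1 - c) - 1) :=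
            mul_le_mul_of_nonneg_left h1 (by linarith)
          have h3 : x * (α * c * (1 - c) - 1) ≤ c * (α * c * (1 - c) - 1) := by nlinarith
          nlinarith
        linarith
      -- step 1: eventually reach below c
      have hexT : ∃ T, 0 ≤ T ∧ r T ≤ c := by
        by_contra h
        push_neg at h
        have h0 : c < r 0 := h 0 le_rfl
        set X := (r 0 - c) / ε + 1 with hXdef
        have hX0 : 0 ≤ X := by
          rw [hXdef]
          have := div_pos (by linarith : 0 < r 0 - c) hε
          linarith
        have hd := decay10 (m := -ε) hX0
          (fun t ht => hr t ht.1)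
          (fun t ht => key t ht.1 (le_of_lt (h t ht.1)))
        have hXe : ε * X = (r 0 - c) + ε := by
          rw [hXdef]; field_simp
        have hX : c < r X := h X hX0
        nlinarith
      obtain ⟨T, hT0, hTc⟩ := hexT
      -- step 2: stays below c
      have hstay : ∀ t, T ≤ t → r t ≤ c := by
        intro t ht
        by_contra hgt
        push_neg at hgt
        have htT : T < t := by
          rcases lt_or_eq_of_le ht with h | h
          · exact h
          · exfalso; rw [← h] at hgt; linarith
        set S := Set.Icc T t ∩ r ⁻¹' Set.Iic c with hSdef
        have hSne : S.Nonempty := ⟨T, ⟨le_rfl, htT.le⟩, hTc⟩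
        have hSbdd : BddAbove S := ⟨t, fun u hu => hu.1.2⟩
        have hcont : ContinuousOn r (Set.Icc T t) := fun u hu =>
          ((hr u (le_trans hT0 hu.1)).continuousAt).continuousWithinAt
        have hSclosed : IsClosed S :=
          hcont.preimage_isClosed_of_isClosed isClosed_Icc isClosed_Iic
        set s₀ := sSup S with hs₀def
        have hs₀S : s₀ ∈ S := hSclosed.csSup_mem hSne hSbdd
        have hs₀c : r s₀ ≤ c := hs₀S.2
        have hTs₀ : T ≤ s₀ := hs₀S.1.1
        have hs₀0 : (0:ℝ) ≤ s₀ := le_trans hT0 hTs₀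
        have hs₀t : s₀ < t := by
          rcases lt_or_eq_of_le hs₀S.1.2 with h | h
          · exact h
          · exfalso; rw [h] at hs₀c; linarith
        have hup : ∀ u ∈ Set.Ioc s₀ t, c < r u := by
          intro u hu
          by_contra h
          push_neg at h
          have huS : u ∈ S := ⟨⟨le_trans hTs₀ hu.1.le, hu.2⟩, h⟩
          exact absurd (le_csSup hSbdd huS) (not_le.mpr hu.1)
        have hclaim : ∀ u ∈ Set.Ioc s₀ t, r t ≤ r u := by
          intro u hu
          have hd := decay10 (m := -ε) hu.2
            (fun v hv => hr v (by linarith [hu.1, hv.1]))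
            (fun v hv => key v (by linarith [hu.1, hv.1])
              (le_of_lt (hup v ⟨lt_of_lt_of_le hu.1 hv.1, hv.2⟩)))
          nlinarith [hu.2, mul_nonneg hε.le (by linarith [hu.2] : (0:ℝ) ≤ t - u)]
        have htend : Tendsto r (𝓝[>] s₀) (𝓝 (r s₀)) :=
          ((hr s₀ hs₀0).continuousAt).continuousWithinAt.tendsto
        have hev : ∀ᶠ u in 𝓝[>] s₀, r t ≤ r u := by
          filter_upwards [Ioc_mem_nhdsGT_of_mem ⟨le_rfl, hs₀t⟩] with u hu
          exact hclaim u hu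
        have : r t ≤ r s₀ := ge_of_tendsto htend hev
        linarith
      apply limsup_le_of_le hcb
      filter_upwards [eventually_ge_atTop T] with t ht
      exact hstay t ht
end

section
/- Let η be a random variable on [0,1] solving the RDE η =_d χ·(η₁ + (1-η₁)η₂η₃) where η₁,η₂,η₃ are independent copies of η with mean E[η] = z_mid and χ is an independent Bernoulli(α/(α+1)) random variable, α > 4, and suppose the law of η is the minimal solution ν̲_mid. Then P[η = 0] = z_mid and P[η = 1] = 0, where z_mid = 1/2 - √(1/4 - 1/α). -/
open MeasureTheory Set

/-!
On `[0,1]`, `ĉob(a,b,d) = 1` iff `a = 1` or `b = d = 1`, and `ĉob(a,b,d) ≠ 0` iff `a ≠ 0` or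
`b, d ≠ 0`. Hence both `ν {1}` and `ν {0}ᶜ` satisfy `p = α/(α+1) · (p + (1-p) p²)`, i.e. the
base fixed-point equation `p = α p² (1 - p)`, whose roots are `0`, `z_mid` and `1 - z_mid`.
Integrating `1_{x = 1} ≤ x ≤ 1_{x ≠ 0}` gives `ν {1} ≤ z_mid ≤ ν {0}ᶜ`, and equality on either
side would force `ν` to be concentrated on `{0,1}`. So `ν {1} = 0` and `ν {0}ᶜ = 1 - z_mid`.
-/

namespace CooperativeBranching

def cob (a b d : ℝ) : ℝ := a + (1 - a) * b * d

def rdeMap (q : ℝ × ℝ × ℝ × ℝ) : ℝ := q.1 * cob q.2.1 q.2.2.1 q.2.2.2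

noncomputable def chiLaw (α : ℝ) : Measure ℝ :=
  ENNReal.ofReal (α / (α + 1)) • Measure.dirac 1 + ENNReal.ofReal (1 / (α + 1)) • Measure.dirac 0

lemma cob_eq_one_iff {a b d : ℝ} (hb : b ∈ Icc (0 : ℝ) 1)
    (hd : d ∈ Icc (0 : ℝ) 1) : cob a b d = 1 ↔ a = 1 ∨ b = 1 ∧ d = 1 := by
  have hfac : cob a b d - 1 = -((1 - a) * (1 - b * d)) := by unfold cob; ring
  rw [← sub_eq_zero, hfac, neg_eq_zero, mul_eq_zero, sub_eq_zero, sub_eq_zero, eq_comm (a := 1),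
    eq_comm (a := (1 : ℝ))]
  refine or_congr_right ⟨fun h => ⟨by nlinarith [hb.1, hb.2, hd.1, hd.2], by
    nlinarith [hb.1, hb.2, hd.1, hd.2]⟩, fun ⟨h1, h2⟩ => by rw [h1, h2, one_mul]⟩

lemma cob_ne_zero_iff {a b d : ℝ} (ha : a ∈ Icc (0 : ℝ) 1) (hb : b ∈ Icc (0 : ℝ) 1)
    (hd : d ∈ Icc (0 : ℝ) 1) : cob a b d ≠ 0 ↔ a ≠ 0 ∨ b ≠ 0 ∧ d ≠ 0 := by
  have hrest : 0 ≤ (1 - a) * b * d := mul_nonneg (mul_nonneg (by linarith [ha.2]) hb.1) hd.1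
  unfold cob
  by_cases ha0 : a = 0
  · simp [ha0]
  · simp only [ne_eq, ha0, not_false_eq_true, true_or, iff_true]
    linarith [lt_of_le_of_ne ha.1 (Ne.symm ha0)]

lemma chiLaw_singleton_one (α : ℝ) : chiLaw α {1} = ENNReal.ofReal (α / (α + 1)) := by
  simp [chiLaw]

lemma ae_chiLaw (α : ℝ) : ∀ᵐ c ∂chiLaw α, c = 0 ∨ c = 1 := by
  simp only [chiLaw, ae_add_measure_iff]
  exact ⟨Measure.ae_smul_measure (by simp [ae_dirac_eq]) _,
    Measure.ae_smul_measure (by simp [ae_dirac_eq]) _⟩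

lemma measurable_rdeMap : Measurable rdeMap := by
  unfold rdeMap cob; fun_prop

lemma map_rdeMap_apply {χ ν : Measure ℝ} [IsProbabilityMeasure ν]
    (hχ : ∀ᵐ c ∂χ, c = 0 ∨ c = 1) (hν : ∀ᵐ x ∂ν, x ∈ Icc (0 : ℝ) 1) {S : Set ℝ}
    (hS : MeasurableSet S) (h0 : (0 : ℝ) ∉ S)
    (hcob : ∀ a ∈ Icc (0 : ℝ) 1, ∀ b ∈ Icc (0 : ℝ) 1, ∀ d ∈ Icc (0 : ℝ) 1,
      cob a b d ∈ S ↔ a ∈ S ∨ b ∈ S ∧ d ∈ S) :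
    Measure.map rdeMap (χ.prod (ν.prod (ν.prod ν))) S =
      χ {1} * (ν S + ν Sᶜ * (ν S * ν S)) := by
  have hpre : rdeMap ⁻¹' S =ᵐ[χ.prod (ν.prod (ν.prod ν))]
      {1} ×ˢ (S ×ˢ univ ×ˢ univ ∪ Sᶜ ×ˢ S ×ˢ S) := by
    let μ := χ.prod (ν.prod (ν.prod ν))
    have h1 : ∀ᵐ q ∂μ, q.1 = 0 ∨ q.1 = 1 := Measure.quasiMeasurePreserving_fst.ae hχ
    have h2 : ∀ᵐ q ∂μ, q.2.1 ∈ Icc (0 : ℝ) 1 :=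
      Measure.quasiMeasurePreserving_snd.ae (Measure.quasiMeasurePreserving_fst.ae hν)
    have h3 : ∀ᵐ q ∂μ, q.2.2.1 ∈ Icc (0 : ℝ) 1 := Measure.quasiMeasurePreserving_snd.ae
      (Measure.quasiMeasurePreserving_snd.ae (Measure.quasiMeasurePreserving_fst.ae hν))
    have h4 : ∀ᵐ q ∂μ, q.2.2.2 ∈ Icc (0 : ℝ) 1 := Measure.quasiMeasurePreserving_snd.ae
      (Measure.quasiMeasurePreserving_snd.ae (Measure.quasiMeasurePreserving_snd.ae hν))
    rw [Filter.eventuallyEq_set]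
    filter_upwards [h1, h2, h3, h4] with ⟨c, a, b, d⟩ hc ha hb hd
    rcases hc with rfl | rfl
    · simp [rdeMap, h0]
    · simp only [mem_preimage, rdeMap, one_mul, hcob a ha b hb d hd, univ_prod_univ, prod_union,
        mem_union, mem_prod, mem_singleton_iff, mem_univ, and_true, true_and, mem_compl_iff]
      tauto
  have hdisj : Disjoint (S ×ˢ (univ : Set ℝ) ×ˢ (univ : Set ℝ)) (Sᶜ ×ˢ S ×ˢ S) :=
    Set.disjoint_prod.2 (Or.inl disjoint_compl_right)
  rw [Measure.map_apply measurable_rdeMap hS, measure_congr hpre, Measure.prod_prod,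
    measure_union hdisj (hS.compl.prod (hS.prod hS))]
  simp only [Measure.prod_prod, measure_univ, mul_one]

lemma measureReal_eq_of_rde {α : ℝ} (hα : 0 < α) {ν : Measure ℝ} [IsProbabilityMeasure ν]
    (hν : ∀ᵐ x ∂ν, x ∈ Icc (0 : ℝ) 1)
    (hRDE : ν = Measure.map rdeMap ((chiLaw α).prod (ν.prod (ν.prod ν)))) {S : Set ℝ}
    (hS : MeasurableSet S) (h0 : (0 : ℝ) ∉ S)
    (hcob : ∀ a ∈ Icc (0 : ℝ) 1, ∀ b ∈ Icc (0 : ℝ) 1, ∀ d ∈ Icc (0 : ℝ) 1,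
      cob a b d ∈ S ↔ a ∈ S ∨ b ∈ S ∧ d ∈ S) :
    ν.real S = α * ν.real S ^ 2 * (1 - ν.real S) := by
  have key : ν.real S = α / (α + 1) * (ν.real S + ν.real Sᶜ * (ν.real S * ν.real S)) := by
    have h := congrArg (fun m : Measure ℝ => (m S).toReal) hRDE
    simp only [map_rdeMap_apply (ae_chiLaw α) hν hS h0 hcob, chiLaw_singleton_one] at h
    rw [ENNReal.toReal_mul, ENNReal.toReal_add (by finiteness) (by finiteness),
      ENNReal.toReal_mul, ENNReal.toReal_mul, ENNReal.toReal_ofReal (by positivity)] at h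
    exact h
  rw [probReal_compl_eq_one_sub hS] at key
  field_simp at key
  linear_combination key

section MeanBounds

variable {ν : Measure ℝ} [IsProbabilityMeasure ν]

lemma integrable_id_of_ae_mem_Icc (hν : ∀ᵐ x ∂ν, x ∈ Icc (0 : ℝ) 1) :
    Integrable (fun x => x) ν :=
  Integrable.of_bound measurable_id.aestronglyMeasurable 1 <| hν.mono fun x hx => by
    rw [Real.norm_eq_abs, abs_le]; exact ⟨by linarith [hx.1], hx.2⟩

lemma measureReal_one_lt_integral (hν : ∀ᵐ x ∂ν, x ∈ Icc (0 : ℝ) 1)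
    (hmin : ¬ ∀ᵐ x ∂ν, x ∈ ({0, 1} : Set ℝ)) : ν.real {1} < ∫ x, x ∂ν := by
  have hind : Integrable (({1} : Set ℝ).indicator (1 : ℝ → ℝ)) ν :=
    (integrable_const 1).indicator (measurableSet_singleton 1)
  have hle : ({1} : Set ℝ).indicator 1 ≤ᵐ[ν] fun x => x := hν.mono fun x hx => by
    by_cases h : x = 1 <;> simp [h, hx.1]
  rw [← integral_indicator_one (measurableSet_singleton 1)]
  refine lt_of_le_of_ne (integral_mono_ae hind (integrable_id_of_ae_mem_Icc hν) hle)
    fun heq => hmin ?_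
  filter_upwards [(integral_eq_iff_of_ae_le hind (integrable_id_of_ae_mem_Icc hν) hle).1 heq]
    with x hx
  by_cases h : x = 1 <;> simp_all [eq_comm]

lemma integral_lt_measureReal_compl_zero (hν : ∀ᵐ x ∂ν, x ∈ Icc (0 : ℝ) 1)
    (hmin : ¬ ∀ᵐ x ∂ν, x ∈ ({0, 1} : Set ℝ)) : ∫ x, x ∂ν < ν.real {0}ᶜ := by
  have hind : Integrable (({0}ᶜ : Set ℝ).indicator (1 : ℝ → ℝ)) ν :=
    (integrable_const 1).indicator (measurableSet_singleton 0).compl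
  have hle : (fun x => x) ≤ᵐ[ν] ({0}ᶜ : Set ℝ).indicator 1 := hν.mono fun x hx => by
    by_cases h : x = 0 <;> simp [h, hx.2]
  rw [← integral_indicator_one (measurableSet_singleton 0).compl]
  refine lt_of_le_of_ne (integral_mono_ae (integrable_id_of_ae_mem_Icc hν) hind hle)
    fun heq => hmin ?_
  filter_upwards [(integral_eq_iff_of_ae_le (integrable_id_of_ae_mem_Icc hν) hind hle).1 heq]
    with x hx
  by_cases h : x = 0 <;> simp_all

end MeanBounds

lemma zmid_spec {α z : ℝ} (hα : 4 < α) (hz : z = 1 / 2 - √(1 / 4 - 1 / α)) :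
    0 < z ∧ z < 1 / 2 ∧ α * (z * (1 - z)) = 1 := by
  have hα0 : 0 < α := by linarith
  have hdisc : 0 < 1 / 4 - 1 / α := by
    rw [sub_pos, div_lt_div_iff₀ hα0 (by norm_num)]; linarith
  have hsq : √(1 / 4 - 1 / α) ^ 2 = 1 / 4 - 1 / α := Real.sq_sqrt hdisc.le
  have hpos : 0 < √(1 / 4 - 1 / α) := Real.sqrt_pos.2 hdisc
  have hlt : √(1 / 4 - 1 / α) < 1 / 2 := by
    nlinarith [one_div_pos.2 hα0]
  subst hz
  refine ⟨by linarith, by linarith, ?_⟩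
  rw [show (1 / 2 - √(1 / 4 - 1 / α)) * (1 - (1 / 2 - √(1 / 4 - 1 / α)))
    = 1 / 4 - √(1 / 4 - 1 / α) ^ 2 by ring, hsq, sub_sub_cancel, mul_one_div_cancel hα0.ne']

lemma eq_zero_or_eq_or_eq_one_sub {α z x : ℝ} (hα : 0 < α) (hz : α * (z * (1 - z)) = 1)
    (hx : x = α * x ^ 2 * (1 - x)) : x = 0 ∨ x = z ∨ x = 1 - z := by
  have h : α * (x * ((x - z) * (x - (1 - z)))) = 0 := by linear_combination x * hz + hx
  simpa [hα.ne', sub_eq_zero] using h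

end CooperativeBranching

open CooperativeBranching

/-- Let `α > 4` and `z_mid = 1/2 - √(1/4 - 1/α)`. Let `ν` be the law of a `[0,1]`-valued
random variable `η` with mean `z_mid` solving the higher-level RDE
`η =_d χ·(η₁ + (1-η₁)η₂η₃)`, where `η₁,η₂,η₃` are independent copies of `η` and `χ` is
an independent Bernoulli(α/(α+1)) variable; assume `ν` is the minimal solution
`ν̲_mid`, i.e. it is not concentrated on `{0,1}`. Then `P[η = 0] = z_mid` and
`P[η = 1] = 0`. -/
theorem stmt11 (α : ℝ) (hα : 4 < α) (zmid : ℝ)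
    (hz : zmid = 1 / 2 - Real.sqrt (1 / 4 - 1 / α))
    (ν : Measure ℝ) [IsProbabilityMeasure ν]
    (hsupp : ν (Set.Icc 0 1) = 1)
    (hmean : ∫ x, x ∂ν = zmid)
    (hRDE : ν = Measure.map
        (fun q : ℝ × ℝ × ℝ × ℝ => q.1 * (q.2.1 + (1 - q.2.1) * q.2.2.1 * q.2.2.2))
        ((ENNReal.ofReal (α / (α + 1)) • Measure.dirac (1:ℝ)
            + ENNReal.ofReal (1 / (α + 1)) • Measure.dirac (0:ℝ)).prod
          (ν.prod (ν.prod ν))))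
    (hmin : ν ({0, 1} : Set ℝ) ≠ 1) :
    ν {0} = ENNReal.ofReal zmid ∧ ν {1} = 0 := by
  have hν : ∀ᵐ x ∂ν, x ∈ Icc (0 : ℝ) 1 := by
    rw [ae_mem_iff_measure_eq measurableSet_Icc.nullMeasurableSet, hsupp, measure_univ]
  have hmin' : ¬ ∀ᵐ x ∂ν, x ∈ ({0, 1} : Set ℝ) := by
    rwa [ae_mem_iff_measure_eq ((measurableSet_singleton 1).insert 0).nullMeasurableSet,
      measure_univ]
  obtain ⟨hz0, hzhalf, hzroot⟩ := zmid_spec hα hz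
  have hRDE' : ν = Measure.map rdeMap ((chiLaw α).prod (ν.prod (ν.prod ν))) := hRDE
  have hfix_one := measureReal_eq_of_rde (by linarith) hν hRDE' (measurableSet_singleton 1)
    (by norm_num) fun a _ b hb d hd => cob_eq_one_iff hb hd
  have hfix_pos := measureReal_eq_of_rde (by linarith) hν hRDE'
    (measurableSet_singleton 0).compl (fun h => h rfl)
    fun a ha b hb d hd => cob_ne_zero_iff ha hb hd
  have hone_lt := hmean ▸ measureReal_one_lt_integral hν hmin'
  have hpos_gt := hmean ▸ integral_lt_measureReal_compl_zero hν hmin'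
  have hone : ν.real {1} = 0 := by
    rcases eq_zero_or_eq_or_eq_one_sub (by linarith) hzroot hfix_one with h | h | h
    · exact h
    · exact absurd h hone_lt.ne
    · linarith
  have hpos : ν.real {0}ᶜ = 1 - zmid := by
    rcases eq_zero_or_eq_or_eq_one_sub (by linarith) hzroot hfix_pos with h | h | h
    · linarith
    · exact absurd h hpos_gt.ne'
    · exact h
  rw [probReal_compl_eq_one_sub (measurableSet_singleton 0)] at hpos
  refine ⟨?_, (measureReal_eq_zero_iff).1 hone⟩
  rw [← ofReal_measureReal]
  congr 1
  linarith
end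

section
/- Let S be a compact metrizable space equipped with a closed partial order. If X, Y are S-valued random variables with X ≤ Y almost surely and the law of X stochastically dominates the law of Y (i.e., P[X ∈ A] ≥ P[Y ∈ A] for all closed increasing sets A), then X = Y almost surely. -/
/-!
Closed upper sets separate points of a compact second countable space with a closed order:
whenever `y ≰ x`, some member `A` of a fixed countable family of closed upper sets contains `y`
but not `x`. For each such `A`, `X ≤ Y` gives `{X ∈ A} ⊆ {Y ∈ A}` almost surely, and the reverse
inequality of measures forces these events to agree almost surely. Off a null set, `X ω` and
`Y ω` then lie in the same members of the family, so `Y ω ≤ X ω`, and antisymmetry concludes.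
-/

open MeasureTheory Set TopologicalSpace Topology

section Topology

variable {S : Type*} [TopologicalSpace S] [Preorder S] [OrderClosedTopology S]

theorem IsCompact.isClosed_upperClosure {s : Set S} (hs : IsCompact s) :
    IsClosed (upperClosure s : Set S) := by
  have : CompactSpace s := isCompact_iff_compactSpace.mp hs
  have hrel : IsClosed {p : s × S | (p.1 : S) ≤ p.2} :=
    isClosed_le (continuous_subtype_val.comp continuous_fst) continuous_snd
  convert isClosedMap_snd_of_compactSpace _ hrel using 1
  ext z
  simp

theorem exists_countable_isClosed_isUpperSet_separating
    [CompactSpace S] [RegularSpace S] [SecondCountableTopology S] :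
    ∃ 𝒜 : Set (Set S), 𝒜.Countable ∧ (∀ A ∈ 𝒜, IsClosed A ∧ IsUpperSet A) ∧
      ∀ x y : S, ¬y ≤ x → ∃ A ∈ 𝒜, y ∈ A ∧ x ∉ A := by
  obtain ⟨B, hBc, -, hB⟩ := exists_countable_basis S
  refine ⟨(fun U => (upperClosure (closure U) : Set S)) '' B, hBc.image _, ?_, ?_⟩
  · rintro _ ⟨U, -, rfl⟩
    exact ⟨isClosed_closure.isCompact.isClosed_upperClosure, (upperClosure _).upper⟩
  · intro x y hyx
    have hV : (Iic x)ᶜ ∈ 𝓝 y := isClosed_Iic.isOpen_compl.mem_nhds hyx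
    obtain ⟨U, hUB, hyU, hUx⟩ := hB.exists_closure_subset hV
    refine ⟨_, mem_image_of_mem _ hUB, subset_upperClosure (subset_closure hyU), ?_⟩
    rintro ⟨u, hu, hux⟩
    exact hUx hu hux

end Topology

theorem preimage_ae_eq_of_ae_le_of_measure_le {Ω S : Type*} [MeasurableSpace Ω]
    [MeasurableSpace S] [Preorder S] {μ : Measure Ω} [IsFiniteMeasure μ] {X Y : Ω → S}
    {A : Set S} (hA : IsUpperSet A) (hAm : MeasurableSet A) (hX : AEMeasurable X μ)
    (hle : ∀ᵐ ω ∂μ, X ω ≤ Y ω) (hμ : μ (Y ⁻¹' A) ≤ μ (X ⁻¹' A)) :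
    X ⁻¹' A =ᵐ[μ] Y ⁻¹' A :=
  ae_eq_of_ae_subset_of_measure_ge (hle.mono fun _ hXY hXA => hA hXY hXA) hμ
    (hX.nullMeasurableSet_preimage hAm) (measure_ne_top _ _)

theorem stmt13_general {Ω S : Type*} [MeasurableSpace Ω]
    [MetricSpace S] [CompactSpace S] [PartialOrder S]
    [MeasurableSpace S] [BorelSpace S]
    (hclosed : IsClosed {p : S × S | p.1 ≤ p.2})
    (P : Measure Ω) [IsProbabilityMeasure P]
    (X Y : Ω → S) (hX : Measurable X)
    (hle : ∀ᵐ ω ∂P, X ω ≤ Y ω)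
    (hdom : ∀ A : Set S, IsClosed A → (∀ x ∈ A, ∀ y, x ≤ y → y ∈ A) →
      P (Y ⁻¹' A) ≤ P (X ⁻¹' A)) :
    ∀ᵐ ω ∂P, X ω = Y ω := by
  have : OrderClosedTopology S := ⟨hclosed⟩
  obtain ⟨𝒜, h𝒜c, h𝒜, hsep⟩ := exists_countable_isClosed_isUpperSet_separating (S := S)
  have hsame : ∀ᵐ ω ∂P, ∀ A ∈ 𝒜, (X ω ∈ A ↔ Y ω ∈ A) := by
    refine (ae_ball_iff h𝒜c).2 fun A hA => ?_
    obtain ⟨hAc, hAu⟩ := h𝒜 A hA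
    have hAe := preimage_ae_eq_of_ae_le_of_measure_le hAu hAc.measurableSet hX.aemeasurable
      hle (hdom A hAc fun _ hx _ hxy => hAu hxy hx)
    exact hAe.mono fun _ h => Iff.of_eq h
  filter_upwards [hle, hsame] with ω hXY hmem
  by_contra hne
  obtain ⟨A, hA, hYA, hXA⟩ := hsep _ _ fun hYX => hne (hXY.antisymm hYX)
  exact hXA ((hmem A hA).2 hYA)

/-- Comparison principle: on a compact metrizable space `S` with a closed partial order,
if `X ≤ Y` a.s. and the law of `X` stochastically dominates the law of `Y`
(`P[X ∈ A] ≥ P[Y ∈ A]` for all closed increasing sets `A`), then `X = Y` a.s. -/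
theorem stmt13 {Ω S : Type*} [MeasurableSpace Ω]
    [MetricSpace S] [CompactSpace S] [PartialOrder S]
    [MeasurableSpace S] [BorelSpace S]
    (hclosed : IsClosed {p : S × S | p.1 ≤ p.2})
    (P : Measure Ω) [IsProbabilityMeasure P]
    (X Y : Ω → S) (hX : Measurable X) (hY : Measurable Y)
    (hle : ∀ᵐ ω ∂P, X ω ≤ Y ω)
    (hdom : ∀ A : Set S, IsClosed A → (∀ x ∈ A, ∀ y, x ≤ y → y ∈ A) →
      P (Y ⁻¹' A) ≤ P (X ⁻¹' A)) :
    ∀ᵐ ω ∂P, X ω = Y ω :=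
  stmt13_general hclosed P X Y hX hle hdom
end

section
/- Let S be a compact metrizable space with a closed partial order. Then the stochastic order on probability measures on S is closed with respect to weak convergence: if μ_n¹ ≤ μ_n² (stochastic order) for all n and μ_n^i ⇒ μ_∞^i weakly (i = 1,2), then μ_∞¹ ≤ μ_∞². -/
/-!
The couplings concentrated on the closed set `{x ≤ y}` form a closed subset of the compact
space of probability measures on `S × S` (closedness is the portmanteau inequality for closed
sets; compactness is Prokhorov's theorem on a compact space). The stochastically ordered pairs
are the image of this compact set under the continuous map taking a coupling to its two
marginals, so they form a compact, hence closed, subset of the Hausdorff space of pairs of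
probability measures.
-/

open MeasureTheory Filter

/-- `μ` is smaller than `ν` in the stochastic order: there is a coupling `lam` with
marginals `μ` and `ν` concentrated on `{(x,y) : x ≤ y}`. -/
def stochLE {S : Type*} [MeasurableSpace S] [Preorder S] (μ ν : Measure S) : Prop :=
  ∃ lam : Measure (S × S), IsProbabilityMeasure lam ∧
    lam.map Prod.fst = μ ∧ lam.map Prod.snd = ν ∧
    lam {p : S × S | p.1 ≤ p.2} = 1

open Topology

namespace MeasureTheory.ProbabilityMeasure

lemma isClosed_setOf_measure_eq_one {X : Type*} [TopologicalSpace X] [MeasurableSpace X]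
    [OpensMeasurableSpace X] [HasOuterApproxClosed X] {C : Set X} (hC : IsClosed C) :
    IsClosed {P : ProbabilityMeasure X | (P : Measure X) C = 1} := by
  refine isClosed_iff_clusterPt.2 fun P hP => le_antisymm prob_le_one ?_
  set s := {P : ProbabilityMeasure X | (P : Measure X) C = 1}
  have : NeBot (𝓝[s] P) := hP
  have hlimsup : (𝓝[s] P).limsup (fun Q : ProbabilityMeasure X => (Q : Measure X) C) = 1 := by
    rw [limsup_congr (eventually_mem_nhdsWithin.mono fun Q (hQ : Q ∈ s) => hQ), limsup_const]
  exact hlimsup ▸ limsup_measure_closed_le_of_tendsto (tendsto_id.mono_left nhdsWithin_le_nhds) hC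

end MeasureTheory.ProbabilityMeasure

open ProbabilityMeasure

lemma stochLE_iff_exists_probabilityMeasure {S : Type*} [MeasurableSpace S] [Preorder S]
    (P Q : ProbabilityMeasure S) :
    stochLE (P : Measure S) Q ↔ ∃ L : ProbabilityMeasure (S × S),
      (L : Measure (S × S)) {p | p.1 ≤ p.2} = 1 ∧
      L.map measurable_fst.aemeasurable = P ∧ L.map measurable_snd.aemeasurable = Q := by
  constructor
  · rintro ⟨L, hL, h1, h2, hle⟩
    exact ⟨⟨L, hL⟩, hle, Subtype.ext h1, Subtype.ext h2⟩
  · rintro ⟨L, hle, h1, h2⟩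
    exact ⟨L, inferInstance, congrArg Subtype.val h1, congrArg Subtype.val h2, hle⟩

lemma isClosed_setOf_stochLE {S : Type*} [MetricSpace S] [CompactSpace S] [Preorder S]
    [MeasurableSpace S] [BorelSpace S] (hclosed : IsClosed {p : S × S | p.1 ≤ p.2}) :
    IsClosed {PQ : ProbabilityMeasure S × ProbabilityMeasure S |
      stochLE (PQ.1 : Measure S) (PQ.2 : Measure S)} := by
  have himage : {PQ : ProbabilityMeasure S × ProbabilityMeasure S |
      stochLE (PQ.1 : Measure S) (PQ.2 : Measure S)} =
      (fun L : ProbabilityMeasure (S × S) => (L.map measurable_fst.aemeasurable,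
        L.map measurable_snd.aemeasurable)) '' {L | (L : Measure (S × S)) {p | p.1 ≤ p.2} = 1} := by
    ext ⟨P, Q⟩
    simp [stochLE_iff_exists_probabilityMeasure]
  rw [himage]
  exact ((isClosed_setOf_measure_eq_one hclosed).isCompact.image
    ((continuous_map continuous_fst).prodMk (continuous_map continuous_snd))).isClosed

/-- On a compact metrizable space with a closed partial order, the stochastic order on
probability measures is closed under weak convergence: if `μ¹_n ≤ μ²_n` for all `n` and
`μ^i_n ⇒ μ^i_∞` weakly, then `μ¹_∞ ≤ μ²_∞`. -/
theorem stmt14 {S : Type*} [MetricSpace S] [CompactSpace S] [PartialOrder S]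
    [MeasurableSpace S] [BorelSpace S]
    (hclosed : IsClosed {p : S × S | p.1 ≤ p.2})
    (μ₁ μ₂ : ℕ → ProbabilityMeasure S) (ν₁ ν₂ : ProbabilityMeasure S)
    (hle : ∀ n, stochLE (μ₁ n : Measure S) (μ₂ n : Measure S))
    (h₁ : Tendsto μ₁ atTop (nhds ν₁)) (h₂ : Tendsto μ₂ atTop (nhds ν₂)) :
    stochLE (ν₁ : Measure S) (ν₂ : Measure S) :=
  (isClosed_setOf_stochLE hclosed).mem_of_tendsto (h₁.prodMk_nhds h₂) (Eventually.of_forall hle)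
end

section
/- Let S be a compact metrizable space with a closed partial order. Then every sequence (μ_n) of probability measures on S that is increasing in the stochastic order converges weakly to a limit. -/
open MeasureTheory Filter

/-! The couplings of consecutive measures are glued (Ionescu-Tulcea) into one Markov chain
`Y₀, Y₁, …` whose transition at time `n` is the conditional kernel of the `n`-th coupling, so that
`(Yₙ, Yₙ₊₁)` has the law of that coupling: `Yₙ ~ μₙ` and `Yₙ ≤ Yₙ₊₁` almost surely. In a compact
space with a closed order an increasing sequence has a unique cluster point, hence converges; so
`Yₙ` converges almost surely, and therefore in distribution, which is the weak convergence of
`μₙ`. -/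

open Topology TopologicalSpace ProbabilityTheory

theorem Monotone.exists_tendsto_nhds_of_compactSpace {X ι : Type*} [TopologicalSpace X]
    [CompactSpace X] [PartialOrder X] [ClosedIicTopology X] [ClosedIciTopology X] [Preorder ι]
    [Nonempty ι] [IsDirectedOrder ι] {f : ι → X} (hf : Monotone f) :
    ∃ x, Tendsto f atTop (𝓝 x) := by
  have le_of_mapClusterPt {x} (hx : MapClusterPt x atTop f) (i : ι) : f i ≤ x :=
    isClosed_Ici.mem_of_mapClusterPt hx ((eventually_ge_atTop i).mono fun _ hj => hf hj)
  have mapClusterPt_le {x y} (hx : MapClusterPt x atTop f) (hy : MapClusterPt y atTop f) :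
      x ≤ y :=
    isClosed_Iic.mem_of_mapClusterPt hx (Eventually.of_forall (le_of_mapClusterPt hy))
  obtain ⟨x, -, hx⟩ := isCompact_univ.exists_mapClusterPt (f := atTop) (u := f) (by simp)
  exact ⟨x, tendsto_nhds_of_unique_mapClusterPt fun y hy =>
    (mapClusterPt_le hy hx).antisymm (mapClusterPt_le hx hy)⟩

theorem MeasureTheory.Measure.map_prodMap_compProd_comap {α β γ : Type*} [MeasurableSpace α]
    [MeasurableSpace β] [MeasurableSpace γ] (ν : Measure α) [SFinite ν] (κ : Kernel β γ)
    [IsSFiniteKernel κ] {g : α → β} (hg : Measurable g) :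
    (ν ⊗ₘ κ.comap g hg).map (Prod.map g id) = ν.map g ⊗ₘ κ := by
  ext s hs
  rw [Measure.map_apply (hg.prodMap measurable_id) hs,
    Measure.compProd_apply (hg.prodMap measurable_id hs), Measure.compProd_apply hs,
    lintegral_map (κ.measurable_kernel_prodMk_left hs) hg]
  rfl

section MarkovChain

variable {S : Type*} [MeasurableSpace S]

noncomputable def markovChain (μ₀ : Measure S) (κ : ℕ → Kernel S S) [∀ n, IsMarkovKernel (κ n)] :
    Measure (ℕ → S) :=
  Kernel.trajMeasure (X := fun _ => S) μ₀ fun n =>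
    (κ n).comap (fun x => x ⟨n, Finset.mem_Iic.2 le_rfl⟩) (measurable_pi_apply _)

variable (μ₀ : Measure S) (κ : ℕ → Kernel S S) [∀ n, IsMarkovKernel (κ n)]

instance [IsProbabilityMeasure μ₀] : IsProbabilityMeasure (markovChain μ₀ κ) := by
  unfold markovChain
  infer_instance

theorem map_eval_zero_markovChain : (markovChain μ₀ κ).map (fun ω => ω 0) = μ₀ := by
  have h_eval : (fun ω : ℕ → S => ω 0) =
      (fun x => x ⟨0, Finset.mem_Iic.2 le_rfl⟩) ∘ Preorder.frestrictLe 0 := rfl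
  have h_meas : Measurable ((fun x : Finset.Iic 0 → S => x ⟨0, Finset.mem_Iic.2 le_rfl⟩) ∘
      Preorder.frestrictLe₂ (π := fun _ => S) le_rfl) :=
    (measurable_pi_apply _).comp (Preorder.measurable_frestrictLe₂ _)
  rw [markovChain, Kernel.trajMeasure, Measure.map_comp _ _ (by fun_prop), h_eval,
    Kernel.map_comp_right _ (Preorder.measurable_frestrictLe 0) (measurable_pi_apply _),
    Kernel.traj_map_frestrictLe_of_le le_rfl, Kernel.deterministic_map _ (by fun_prop),
    Measure.deterministic_comp_eq_map]
  ext s hs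
  rw [Measure.map_apply h_meas hs, Measure.map_apply (MeasurableEquiv.measurable _) (h_meas hs)]
  rfl

theorem map_prodMk_eval_succ_markovChain [IsProbabilityMeasure μ₀] (n : ℕ) :
    (markovChain μ₀ κ).map (fun ω => (ω n, ω (n + 1))) =
      (markovChain μ₀ κ).map (fun ω => ω n) ⊗ₘ κ n := by
  have h := congrArg (Measure.map (Prod.map (fun x : Finset.Iic n → S =>
      x ⟨n, Finset.mem_Iic.2 le_rfl⟩) id))
    (Kernel.map_frestrictLe_trajMeasure_compProd_eq_map_trajMeasure (X := fun _ => S)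
      (μ₀ := μ₀) (a := n) (κ := fun n => (κ n).comap
        (fun x : Finset.Iic n → S => x ⟨n, Finset.mem_Iic.2 le_rfl⟩) (measurable_pi_apply _)))
  rw [Measure.map_prodMap_compProd_comap, Measure.map_map, Measure.map_map] at h
  · exact h.symm
  all_goals fun_prop

end MarkovChain

theorem exists_ae_monotone_coupling {S : Type*} [MeasurableSpace S] [StandardBorelSpace S]
    [Preorder S] (hle : MeasurableSet {p : S × S | p.1 ≤ p.2}) {μ : ℕ → Measure S}
    (hμ : ∀ n, stochLE (μ n) (μ (n + 1))) :
    ∃ P : Measure (ℕ → S), IsProbabilityMeasure P ∧ (∀ n, P.map (fun ω => ω n) = μ n) ∧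
      ∀ᵐ ω ∂P, Monotone ω := by
  choose lam hprob hfst hsnd hlam using hμ
  have : Nonempty S := (nonempty_of_isProbabilityMeasure (lam 0)).map Prod.fst
  have : IsProbabilityMeasure (μ 0) := hfst 0 ▸ Measure.isProbabilityMeasure_map (by fun_prop)
  set P := markovChain (μ 0) fun n => (lam n).condKernel
  have h_pair (n : ℕ) (hn : P.map (fun ω => ω n) = μ n) :
      P.map (fun ω => (ω n, ω (n + 1))) = lam n := by
    rw [map_prodMk_eval_succ_markovChain, hn, ← hfst n]
    exact (lam n).disintegrate _
  have h_marg (n : ℕ) : P.map (fun ω => ω n) = μ n := by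
    induction n with
    | zero => exact map_eval_zero_markovChain _ _
    | succ n ih =>
      rw [← hsnd n, ← h_pair n ih, Measure.map_map measurable_snd (by fun_prop)]
      rfl
  refine ⟨P, inferInstance, h_marg, (ae_all_iff.2 fun n => ?_).mono fun ω hω =>
    monotone_nat_of_le_succ hω⟩
  have h_le : ∀ᵐ p ∂(lam n), p.1 ≤ p.2 :=
    (ae_iff_measure_eq hle.nullMeasurableSet).2 ((hlam n).trans measure_univ.symm)
  rw [← h_pair n (h_marg n)] at h_le
  exact ae_of_ae_map (by fun_prop) h_le

theorem exists_tendsto_of_ae_tendsto_of_map_eq {Ω S : Type*} [MeasurableSpace Ω]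
    [TopologicalSpace S] [PseudoMetrizableSpace S] [MeasurableSpace S] [BorelSpace S]
    {P : Measure Ω} [IsProbabilityMeasure P] {X : ℕ → Ω → S} (hX : ∀ n, AEMeasurable (X n) P)
    (h_tendsto : ∀ᵐ ω ∂P, ∃ x, Tendsto (X · ω) atTop (𝓝 x)) {μ : ℕ → ProbabilityMeasure S}
    (hμ : ∀ n, P.map (X n) = μ n) : ∃ ν, Tendsto μ atTop (𝓝 ν) := by
  obtain ⟨Z, hZ, h_lim⟩ := measurable_limit_of_tendsto_metrizable_ae hX h_tendsto
  have h_law := (tendstoInDistribution_of_ae_tendsto hX hZ.aemeasurable h_lim).tendsto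
  exact ⟨_, (tendsto_congr fun n => Subtype.ext (hμ n)).1 h_law⟩

/-- On a compact metrizable space with a closed partial order, every sequence of
probability measures that is increasing in the stochastic order converges weakly. -/
theorem stmt16 {S : Type*} [MetricSpace S] [CompactSpace S] [PartialOrder S]
    [MeasurableSpace S] [BorelSpace S]
    (hclosed : IsClosed {p : S × S | p.1 ≤ p.2})
    (μ : ℕ → ProbabilityMeasure S)
    (hmono : ∀ n, stochLE (μ n : Measure S) (μ (n + 1) : Measure S)) :
    ∃ ν : ProbabilityMeasure S, Tendsto μ atTop (nhds ν) := by
  have : OrderClosedTopology S := ⟨hclosed⟩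
  obtain ⟨P, _, h_marg, h_mono⟩ := exists_ae_monotone_coupling hclosed.measurableSet hmono
  exact exists_tendsto_of_ae_tendsto_of_map_eq (fun n => (measurable_pi_apply n).aemeasurable)
    (h_mono.mono fun ω hω => hω.exists_tendsto_nhds_of_compactSpace) h_marg
end
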